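/- arXiv:1711.09544 — 2 statements merged into one kernel-verified Lean document; each statement's English description precedes it below -/
import Mathlib

section
/- Simple skew Pieri rule at β = 1: for any partitions ν ⊆ μ and any m ≥ 1, g_{(1)}(y) · g_{μ/ν}(y) = (i(ν) − i(μ)) · g_{μ/ν}(y) + Σ_{λ = μ+□} g_{λ/ν}(y) − Σ_{η = ν−□} g_{μ/η}(y) in ℤ[y_1,…,y_m], where the first sum is over all partitions λ obtained from μ by adding a single box, the second sum is over all partitions η obtained from ν by removing a single box, and i(μ) denotes the number of removable boxes (inner corners) of μ. -/
open scoped Classical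

noncomputable section

/-- The cells of the skew shape `λ/μ`. -/
def skewCells (μ lam : YoungDiagram) : Finset (ℕ × ℕ) := lam.cells \ μ.cells

/-- `|λ/μ|`, the number of boxes of the skew shape `λ/μ`. -/
def skewSize (μ lam : YoungDiagram) : ℕ := (skewCells μ lam).card

/-- `c(λ/μ)`, the number of columns containing a box of `λ/μ`. -/
def skewCols (μ lam : YoungDiagram) : ℕ := ((skewCells μ lam).image Prod.snd).card

/-- `r(λ/μ)`, the number of rows containing a box of `λ/μ`. -/
def skewRows (μ lam : YoungDiagram) : ℕ := ((skewCells μ lam).image Prod.fst).card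

/-- `λ/μ` is a horizontal strip: `μ ⊆ λ` and no two boxes of `λ/μ` lie in the same column. -/
def IsHorizontalStrip (μ lam : YoungDiagram) : Prop :=
  μ ≤ lam ∧ ∀ c ∈ skewCells μ lam, ∀ c' ∈ skewCells μ lam, c.2 = c'.2 → c = c'

/-- `λ/μ` is a vertical strip: `μ ⊆ λ` and no two boxes of `λ/μ` lie in the same row. -/
def IsVerticalStrip (μ lam : YoungDiagram) : Prop :=
  μ ≤ lam ∧ ∀ c ∈ skewCells μ lam, ∀ c' ∈ skewCells μ lam, c.1 = c'.1 → c = c'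

/-- `λ/μ` is a rook strip: `μ ⊆ λ` and no two boxes of `λ/μ` share a row or a column. -/
def IsRookStrip (μ lam : YoungDiagram) : Prop :=
  μ ≤ lam ∧ ∀ c ∈ skewCells μ lam, ∀ c' ∈ skewCells μ lam, (c.1 = c'.1 ∨ c.2 = c'.2) → c = c'

/-- `I(μ)`: the set of removable boxes (inner corners) of `μ`. -/
def corners (μ : YoungDiagram) : Finset (ℕ × ℕ) :=
  μ.cells.filter fun c => (c.1 + 1, c.2) ∉ μ.cells ∧ (c.1, c.2 + 1) ∉ μ.cells

/-- `i(μ)`, the number of removable boxes (inner corners) of `μ`. -/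
def numCorners (μ : YoungDiagram) : ℕ := (corners μ).card

/-- The cells of the augmented shape `λ//μ = λ/μ ∪ I(μ)`. -/
def dShape (μ lam : YoungDiagram) : Finset (ℕ × ℕ) := skewCells μ lam ∪ corners μ

/-- `a(λ//μ)`: the number of columns of `λ//μ` that are not columns of `λ/μ`, i.e. the number
of "open" removable boxes of `μ` sharing no column with a box of `λ/μ`. -/
def openCount (μ lam : YoungDiagram) : ℕ :=
  ((corners μ).filter fun c => ∀ c' ∈ skewCells μ lam, c'.2 ≠ c.2).card

/-- A set-valued tableau of shape `λ//μ` with entries in `{1, …, n}` (entry `k ∈ {1,…,n}` is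
encoded as `k-1 : Fin n`): boxes of `λ/μ` carry nonempty sets, boxes of `I(μ)` may be empty,
and every choice of one element from each nonempty box is weakly increasing along rows and
strictly increasing down columns. -/
def IsSVT {n : ℕ} {μ lam : YoungDiagram} (T : ↥(dShape μ lam) → Finset (Fin n)) : Prop :=
  (∀ c : ↥(dShape μ lam), c.1 ∈ skewCells μ lam → (T c).Nonempty) ∧
  (∀ c c' : ↥(dShape μ lam), c.1.1 = c'.1.1 → c.1.2 < c'.1.2 →
    ∀ a ∈ T c, ∀ b ∈ T c', a ≤ b) ∧
  (∀ c c' : ↥(dShape μ lam), c.1.2 = c'.1.2 → c.1.1 < c'.1.1 →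
    ∀ a ∈ T c, ∀ b ∈ T c', a < b)

/-- `|T|`, the total number of entries of a set-valued tableau. -/
def svtSize {n : ℕ} {μ lam : YoungDiagram} (T : ↥(dShape μ lam) → Finset (Fin n)) : ℕ :=
  ∑ c, (T c).card

/-- The skew Grothendieck polynomial `G^β_{λ//μ}(x_1, …, x_n)`, defined combinatorially as
`Σ_T (-β)^{|T| - |λ/μ|} x^T` over set-valued tableaux `T` of shape `λ//μ` with entries
in `{1, …, n}`. -/
def Gsvt (R : Type*) [CommRing R] (β : R) (n : ℕ) (μ lam : YoungDiagram) :
    MvPolynomial (Fin n) R :=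
  ∑ T ∈ Finset.univ.filter (IsSVT (n := n) (μ := μ) (lam := lam)),
    (-β) ^ (svtSize T - skewSize μ lam) • ∏ c, ∏ k ∈ T c, MvPolynomial.X k

/-- A set-valued tableau of the pure skew shape `λ/μ` with entries in `{1, …, n}`:
all boxes carry nonempty sets; rows weakly increase and columns strictly increase. -/
def IsSVTPure {n : ℕ} {μ lam : YoungDiagram} (T : ↥(skewCells μ lam) → Finset (Fin n)) : Prop :=
  (∀ c : ↥(skewCells μ lam), (T c).Nonempty) ∧
  (∀ c c' : ↥(skewCells μ lam), c.1.1 = c'.1.1 → c.1.2 < c'.1.2 →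
    ∀ a ∈ T c, ∀ b ∈ T c', a ≤ b) ∧
  (∀ c c' : ↥(skewCells μ lam), c.1.2 = c'.1.2 → c.1.1 < c'.1.1 →
    ∀ a ∈ T c, ∀ b ∈ T c', a < b)

/-- The pure-skew Grothendieck polynomial `G^β_{λ/μ}(x_1, …, x_n)`, defined combinatorially
as `Σ_T (-β)^{|T| - |λ/μ|} x^T` over set-valued tableaux `T` of the skew shape `λ/μ`. -/
def GsvtPure (R : Type*) [CommRing R] (β : R) (n : ℕ) (μ lam : YoungDiagram) :
    MvPolynomial (Fin n) R :=
  ∑ T ∈ Finset.univ.filter (IsSVTPure (n := n) (μ := μ) (lam := lam)),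
    (-β) ^ ((∑ c, (T c).card) - skewSize μ lam) • ∏ c, ∏ k ∈ T c, MvPolynomial.X k

/-- A reverse plane partition of shape `λ/μ` with entries in `{1, …, n}` (entry `k` encoded as
`k-1 : Fin n`): entries weakly increase along rows and down columns. -/
def IsRPP {n : ℕ} {μ lam : YoungDiagram} (T : ↥(skewCells μ lam) → Fin n) : Prop :=
  (∀ c c' : ↥(skewCells μ lam), c.1.1 = c'.1.1 → c.1.2 ≤ c'.1.2 → T c ≤ T c') ∧
  (∀ c c' : ↥(skewCells μ lam), c.1.2 = c'.1.2 → c.1.1 ≤ c'.1.1 → T c ≤ T c')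

/-- `c_i(T)`: the number of columns of a reverse plane partition `T` containing the entry `i`. -/
def rppColCount {n : ℕ} {μ lam : YoungDiagram} (T : ↥(skewCells μ lam) → Fin n) (i : Fin n) :
    ℕ :=
  ((Finset.univ.filter fun c => T c = i).image fun c => c.1.2).card

/-- The dual skew Grothendieck polynomial `g^β_{λ/μ}(y_1, …, y_n)`, defined combinatorially as
`Σ_T β^{|λ/μ| - |T|} y^T` over reverse plane partitions `T` of shape `λ/μ` with entries in
`{1, …, n}`, where `y^T = ∏_i y_i^{c_i(T)}` and `|T| = Σ_i c_i(T)`. -/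
def grpp (R : Type*) [CommRing R] (β : R) (n : ℕ) (μ lam : YoungDiagram) :
    MvPolynomial (Fin n) R :=
  ∑ T ∈ Finset.univ.filter (IsRPP (n := n) (μ := μ) (lam := lam)),
    β ^ (skewSize μ lam - ∑ i, rppColCount T i) • ∏ i, MvPolynomial.X i ^ rppColCount T i

/-- The finite set of all Young diagrams contained in `λ`. -/
def subDiagrams (lam : YoungDiagram) : Finset YoungDiagram :=
  ((lam.cells.powerset.filter fun s : Finset (ℕ × ℕ) =>
      IsLowerSet (↑s : Set (ℕ × ℕ))).attach).image
    fun s => YoungDiagram.mk s.1 (by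
      have h := s.2
      rw [Finset.mem_filter] at h
      exact h.2)

/-- The Young diagram obtained from `μ` by adding one box at the bottom of column `j`
(whenever this is possible; junk value `⊥` otherwise). -/
def addColDia (μ : YoungDiagram) (j : ℕ) : YoungDiagram :=
  if h : ∃ lam : YoungDiagram, lam.cells = insert (μ.colLen j, j) μ.cells then h.choose else ⊥

/-- The finite set of all Young diagrams obtained from `μ` by adding a single box. -/
def upSet (μ : YoungDiagram) : Finset YoungDiagram :=
  ((Finset.range (μ.rowLen 0 + 1)).filter fun j =>
    ∃ lam : YoungDiagram, lam.cells = insert (μ.colLen j, j) μ.cells).image (addColDia μ)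

/-- The finite set of all Young diagrams obtained from `ν` by removing a single box. -/
def downSet (ν : YoungDiagram) : Finset YoungDiagram :=
  (subDiagrams ν).filter fun η => skewSize η ν = 1

/-- Generalized binomial coefficient `C(a, b) = a(a-1)⋯(a-b+1)/b!` for an integer `a` and a
natural number `b`. -/
def genBinom (a : ℤ) (b : ℕ) : ℤ :=
  if 0 ≤ a then ((a.toNat).choose b : ℤ) else (-1) ^ b * ((b + (-a).toNat - 1).choose b : ℤ)

/-- The single-column partition `(1^k)` as a Young diagram. -/
def colPartition (k : ℕ) : YoungDiagram where
  cells := Finset.range k ×ˢ Finset.range 1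
  isLowerSet := by
    intro c' c hle hc
    simp only [Finset.coe_product, Set.mem_prod, Finset.mem_coe, Finset.mem_range] at *
    exact ⟨lt_of_le_of_lt hle.1 hc.1, lt_of_le_of_lt hle.2 hc.2⟩

/-- The single-row partition `(k)` as a Young diagram. -/
def rowPartition (k : ℕ) : YoungDiagram where
  cells := Finset.range 1 ×ˢ Finset.range k
  isLowerSet := by
    intro c' c hle hc
    simp only [Finset.coe_product, Set.mem_prod, Finset.mem_coe, Finset.mem_range] at *
    exact ⟨lt_of_le_of_lt hle.1 hc.1, lt_of_le_of_lt hle.2 hc.2⟩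

/-! ### Auxiliary development for the proof -/

namespace SkPieri

open Finset MvPolynomial

/-- RPP condition on an arbitrary finite cell set. -/
def RPP {n : ℕ} {S : Finset (ℕ × ℕ)} (T : ↥S → Fin n) : Prop :=
  (∀ c c' : ↥S, c.1.1 = c'.1.1 → c.1.2 ≤ c'.1.2 → T c ≤ T c') ∧
  (∀ c c' : ↥S, c.1.2 = c'.1.2 → c.1.1 ≤ c'.1.1 → T c ≤ T c')

/-- number of columns of `T` containing `i` -/
def ccnt {n : ℕ} {S : Finset (ℕ × ℕ)} (T : ↥S → Fin n) (i : Fin n) : ℕ :=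
  ((Finset.univ.filter fun c => T c = i).image fun c => c.1.2).card

/-- dual Grothendieck polynomial at `β = 1` of an arbitrary finite skew cell set -/
def gC (n : ℕ) (S : Finset (ℕ × ℕ)) : MvPolynomial (Fin n) ℤ :=
  ∑ T ∈ Finset.univ.filter (RPP (n := n) (S := S)),
    ∏ i, MvPolynomial.X i ^ ccnt T i

theorem grpp_eq (n : ℕ) (ν μ : YoungDiagram) :
    grpp ℤ 1 n ν μ = gC n (skewCells ν μ) := by
  simp only [grpp, one_pow, one_smul]
  rfl

lemma mem_of_le_of_mem {σ : YoungDiagram} {a b : ℕ × ℕ} (hab : a ≤ b) (hb : b ∈ σ) :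
    a ∈ σ := by
  obtain ⟨h1, h2⟩ := Prod.le_def.mp hab
  simpa using σ.up_left_mem h1 h2 (by simpa using hb)

/-! ### Columns: addable columns and corner columns -/

/-- a box can be added to `σ` at the bottom of column `j` -/
def addableCol (σ : YoungDiagram) (j : ℕ) : Prop :=
  j = 0 ∨ σ.colLen j < σ.colLen (j - 1)

/-- column `j` contains a removable corner of `ν` -/
def cornerCol (ν : YoungDiagram) (j : ℕ) : Prop :=
  ν.colLen (j + 1) < ν.colLen j

lemma colLen_le_of_le {ν μ : YoungDiagram} (h : ν ≤ μ) (j : ℕ) :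
    ν.colLen j ≤ μ.colLen j := by
  by_contra h'
  push_neg at h'
  have h1 : (μ.colLen j, j) ∈ ν := YoungDiagram.mem_iff_lt_colLen.mpr h'
  have h2 : (μ.colLen j, j) ∈ μ := h h1
  rw [YoungDiagram.mem_iff_lt_colLen] at h2
  omega

lemma rowLen_le_of_le {ν μ : YoungDiagram} (h : ν ≤ μ) (i : ℕ) :
    ν.rowLen i ≤ μ.rowLen i := by
  by_contra h'
  push_neg at h'
  have h1 : (i, μ.rowLen i) ∈ ν := YoungDiagram.mem_iff_lt_rowLen.mpr h'
  have h2 : (i, μ.rowLen i) ∈ μ := h h1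
  rw [YoungDiagram.mem_iff_lt_rowLen] at h2
  omega

lemma lt_rowLen_of_colLen_pos {σ : YoungDiagram} {j : ℕ} (h : 0 < σ.colLen j) :
    j < σ.rowLen 0 := by
  have : (0, j) ∈ σ := YoungDiagram.mem_iff_lt_colLen.mpr h
  exact YoungDiagram.mem_iff_lt_rowLen.mp this

lemma colLen_eq_zero {σ : YoungDiagram} {j : ℕ} (h : σ.rowLen 0 ≤ j) :
    σ.colLen j = 0 := by
  by_contra h'
  have := lt_rowLen_of_colLen_pos (σ := σ) (j := j) (by omega)
  omega

lemma addableCol_lt {σ : YoungDiagram} {j : ℕ} (h : addableCol σ j) :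
    j < σ.rowLen 0 + 1 := by
  rcases h with h | h
  · omega
  · have : 0 < σ.colLen (j - 1) := by omega
    have := lt_rowLen_of_colLen_pos this
    omega

lemma cornerCol_lt {ν : YoungDiagram} {j : ℕ} (h : cornerCol ν j) :
    j < ν.rowLen 0 := by
  have : 0 < ν.colLen j := by unfold cornerCol at h; omega
  exact lt_rowLen_of_colLen_pos this

/-- Helper to compute column lengths. -/
lemma colLen_eq_of_forall {μ : YoungDiagram} {l k : ℕ} (h : ∀ i, (i, l) ∈ μ ↔ i < k) :
    μ.colLen l = k := by
  rcases Nat.lt_trichotomy (μ.colLen l) k with hlt | he | hgt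
  · have := (h (μ.colLen l)).mpr hlt
    rw [YoungDiagram.mem_iff_lt_colLen] at this
    omega
  · exact he
  · have : (k, l) ∈ μ := YoungDiagram.mem_iff_lt_colLen.mpr hgt
    rw [h] at this
    omega

/-! ### Adding and deleting one box -/

lemma addable_lowerSet {σ : YoungDiagram} {j : ℕ} (h : addableCol σ j) :
    IsLowerSet (↑(insert (σ.colLen j, j) σ.cells) : Set (ℕ × ℕ)) := by
  intro b a hab hb
  simp only [Finset.coe_insert, Set.mem_insert_iff, Finset.mem_coe,
    YoungDiagram.mem_cells] at hb ⊢
  obtain ⟨h1, h2⟩ := Prod.le_def.mp hab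
  rcases hb with hb | hb
  · subst hb
    simp only at h1 h2
    by_cases hc : a = (σ.colLen j, j)
    · exact Or.inl hc
    · right
      rw [YoungDiagram.mem_iff_lt_colLen]
      rcases Nat.lt_or_ge a.2 j with hj | hj
      · rcases h with h | h
        · omega
        · have hmono : σ.colLen (j - 1) ≤ σ.colLen a.2 :=
            σ.colLen_anti _ _ (by omega)
          omega
      · have haj : a.2 = j := le_antisymm h2 hj
        rw [haj]
        have : a.1 ≠ σ.colLen j := by
          intro hcon
          exact hc (Prod.ext hcon haj)
        omega
  · exact Or.inr (mem_of_le_of_mem hab hb)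

/-- Add a box at the bottom of column `j` (junk: `σ` itself if not addable). -/
def addBox (σ : YoungDiagram) (j : ℕ) : YoungDiagram :=
  if h : addableCol σ j then ⟨insert (σ.colLen j, j) σ.cells, addable_lowerSet h⟩ else σ

lemma addBox_cells {σ : YoungDiagram} {j : ℕ} (h : addableCol σ j) :
    (addBox σ j).cells = insert (σ.colLen j, j) σ.cells := by
  rw [addBox, dif_pos h]

lemma mem_addBox {σ : YoungDiagram} {j : ℕ} (h : addableCol σ j) {x : ℕ × ℕ} :
    x ∈ addBox σ j ↔ x = (σ.colLen j, j) ∨ x ∈ σ := by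
  rw [← YoungDiagram.mem_cells, addBox_cells h, Finset.mem_insert, YoungDiagram.mem_cells]

lemma colLen_addBox {σ : YoungDiagram} {j : ℕ} (h : addableCol σ j) (l : ℕ) :
    (addBox σ j).colLen l = σ.colLen l + if l = j then 1 else 0 := by
  apply colLen_eq_of_forall
  intro i
  rw [mem_addBox h, YoungDiagram.mem_iff_lt_colLen, Prod.mk.injEq]
  by_cases hl : l = j
  · subst hl
    simp
    omega
  · simp only [if_neg hl]
    omega

lemma le_addBox (σ : YoungDiagram) (j : ℕ) : σ ≤ addBox σ j := by
  rw [← YoungDiagram.cells_subset_iff]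
  unfold addBox
  split
  · exact Finset.subset_insert _ _
  · exact Finset.Subset.refl _

lemma corner_box_mem {ν : YoungDiagram} {j : ℕ} (h : cornerCol ν j) :
    (ν.colLen j - 1, j) ∈ ν := by
  rw [YoungDiagram.mem_iff_lt_colLen]
  unfold cornerCol at h
  omega

lemma corner_lowerSet {ν : YoungDiagram} {j : ℕ} (h : cornerCol ν j) :
    IsLowerSet (↑(ν.cells.erase (ν.colLen j - 1, j)) : Set (ℕ × ℕ)) := by
  have hpos : 0 < ν.colLen j := by unfold cornerCol at h; omega
  intro b a hab hb
  simp only [Finset.coe_erase, Set.mem_diff, Finset.mem_coe, YoungDiagram.mem_cells,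
    Set.mem_singleton_iff] at hb ⊢
  obtain ⟨hbν, hbne⟩ := hb
  refine ⟨mem_of_le_of_mem hab hbν, ?_⟩
  intro hcon
  subst hcon
  obtain ⟨h1, h2⟩ := Prod.le_def.mp hab
  simp only at h1 h2
  have hb2 : b.1 < ν.colLen b.2 := YoungDiagram.mem_iff_lt_colLen.mp hbν
  have hmono : ν.colLen b.2 ≤ ν.colLen j := ν.colLen_anti _ _ h2
  rcases Nat.lt_or_ge j b.2 with hj | hj
  · have : ν.colLen b.2 ≤ ν.colLen (j + 1) := ν.colLen_anti _ _ (by omega)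
    unfold cornerCol at h
    omega
  · have hbj : b.2 = j := by omega
    apply hbne
    have hb1 : b.1 = ν.colLen j - 1 := by omega
    exact Prod.ext hb1 hbj

/-- Delete the corner box of column `j` (junk: `ν` itself if not a corner column). -/
def delBox (ν : YoungDiagram) (j : ℕ) : YoungDiagram :=
  if h : cornerCol ν j then ⟨ν.cells.erase (ν.colLen j - 1, j), corner_lowerSet h⟩ else ν

lemma delBox_cells {ν : YoungDiagram} {j : ℕ} (h : cornerCol ν j) :
    (delBox ν j).cells = ν.cells.erase (ν.colLen j - 1, j) := by
  rw [delBox, dif_pos h]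

lemma mem_delBox {ν : YoungDiagram} {j : ℕ} (h : cornerCol ν j) {x : ℕ × ℕ} :
    x ∈ delBox ν j ↔ x ≠ (ν.colLen j - 1, j) ∧ x ∈ ν := by
  rw [← YoungDiagram.mem_cells, delBox_cells h, Finset.mem_erase, YoungDiagram.mem_cells]

lemma colLen_delBox {ν : YoungDiagram} {j : ℕ} (h : cornerCol ν j) (l : ℕ) :
    (delBox ν j).colLen l = ν.colLen l - if l = j then 1 else 0 := by
  have hpos : 0 < ν.colLen j := by unfold cornerCol at h; omega
  have hc : cornerCol ν j := h
  unfold cornerCol at hc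
  apply colLen_eq_of_forall
  intro i
  rw [mem_delBox h, YoungDiagram.mem_iff_lt_colLen]
  have hne : ∀ a b : ℕ, ((a, l) = (b, j)) ↔ (a = b ∧ l = j) := by
    intro a b; rw [Prod.mk.injEq]
  rw [ne_eq, hne]
  by_cases hl : l = j
  · subst hl
    simp
    omega
  · simp only [if_neg hl]
    omega

lemma delBox_le (ν : YoungDiagram) (j : ℕ) : delBox ν j ≤ ν := by
  rw [← YoungDiagram.cells_subset_iff]
  unfold delBox
  split
  · exact Finset.erase_subset _ _
  · exact Finset.Subset.refl _

end SkPieri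
/-! ### Stage 2: counting lemmas -/

namespace SkPieri

open Finset MvPolynomial

/-- addable columns of `σ`, within `range W` -/
def ACF (σ : YoungDiagram) (W : ℕ) : Finset ℕ := (Finset.range W).filter (addableCol σ)

/-- corner columns of `ν`, within `range W` -/
def CCF (ν : YoungDiagram) (W : ℕ) : Finset ℕ := (Finset.range W).filter (cornerCol ν)

lemma mem_ACF {σ : YoungDiagram} {W j : ℕ} : j ∈ ACF σ W ↔ j < W ∧ addableCol σ j := by
  simp [ACF, Finset.mem_filter]

lemma mem_CCF {ν : YoungDiagram} {W j : ℕ} : j ∈ CCF ν W ↔ j < W ∧ cornerCol ν j := by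
  simp [CCF, Finset.mem_filter]

lemma ACF_eq {σ : YoungDiagram} {W W' : ℕ} (h : σ.rowLen 0 + 1 ≤ W) (h' : σ.rowLen 0 + 1 ≤ W') :
    ACF σ W = ACF σ W' := by
  ext j
  rw [mem_ACF, mem_ACF]
  constructor <;> rintro ⟨h1, h2⟩ <;>
    exact ⟨lt_of_lt_of_le (addableCol_lt h2) (by omega), h2⟩

lemma CCF_eq {ν : YoungDiagram} {W W' : ℕ} (h : ν.rowLen 0 ≤ W) (h' : ν.rowLen 0 ≤ W') :
    CCF ν W = CCF ν W' := by
  ext j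
  rw [mem_CCF, mem_CCF]
  constructor <;> rintro ⟨h1, h2⟩ <;>
    exact ⟨lt_of_lt_of_le (cornerCol_lt h2) (by omega), h2⟩

lemma count_shift (P : ℕ → Prop) [DecidablePred P] (k : ℕ) :
    ((Finset.range (k + 1)).filter P).card
      = (if P 0 then 1 else 0) + ((Finset.range k).filter fun j => P (j + 1)).card := by
  induction k with
  | zero =>
    rw [Finset.range_one, Finset.filter_singleton]
    split <;> simp
  | succ k ih =>
    rw [Finset.range_add_one, Finset.filter_insert]
    conv_rhs => rw [Finset.range_add_one, Finset.filter_insert]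
    by_cases hP : P (k + 1)
    · rw [if_pos hP, if_pos hP,
        Finset.card_insert_of_notMem (by simp), Finset.card_insert_of_notMem (by simp), ih]
      omega
    · rw [if_neg hP, if_neg hP, ih]

lemma seq_key : ∀ (w : ℕ) (s n : ℕ → ℕ), (∀ j, s (j + 1) ≤ s j) → (∀ j, n (j + 1) ≤ n j) →
    (∀ j, n j ≤ s j) → (∀ j, w ≤ j → s j = 0) →
    ((Finset.range (w + 1)).filter fun j => (j = 0 ∨ s j < s (j - 1)) ∧ s j = n j).card
      = ((Finset.range (w + 1)).filter fun j => n (j + 1) < n j ∧ s j = n j).card + 1 := by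
  intro w
  induction w with
  | zero =>
    intro s n hs hn hns h0
    have hs0 : s 0 = 0 := h0 0 le_rfl
    have hn0 : n 0 = 0 := by have := hns 0; omega
    have hn1 : n 1 ≤ n 0 := hn 0
    rw [Finset.range_one, Finset.filter_singleton, Finset.filter_singleton]
    rw [if_pos (⟨Or.inl rfl, by omega⟩ : (0 = 0 ∨ s 0 < s (0 - 1)) ∧ s 0 = n 0)]
    rw [if_neg (by intro hcon; omega)]
    simp
  | succ w ih =>
    intro s n hs hn hns h0
    have IH := ih (fun j => s (j + 1)) (fun j => n (j + 1)) (fun j => hs (j + 1))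
      (fun j => hn (j + 1)) (fun j => hns (j + 1)) (fun j hj => h0 (j + 1) (by omega))
    -- shift both sides of the goal
    rw [count_shift (fun j => (j = 0 ∨ s j < s (j - 1)) ∧ s j = n j) (w + 1),
      count_shift (fun j => n (j + 1) < n j ∧ s j = n j) (w + 1)]
    -- normalize the shifted predicates
    have eL : ((Finset.range (w + 1)).filter fun j =>
        (j + 1 = 0 ∨ s (j + 1) < s (j + 1 - 1)) ∧ s (j + 1) = n (j + 1))
        = (Finset.range (w + 1)).filter fun j => s (j + 1) < s j ∧ s (j + 1) = n (j + 1) := by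
      apply Finset.filter_congr
      intro j _
      simp only [Nat.add_sub_cancel, Nat.succ_ne_zero, false_or]
    rw [eL]
    -- shift the LHS of IH
    rw [count_shift (fun j => (j = 0 ∨ s (j + 1) < s (j - 1 + 1)) ∧ s (j + 1) = n (j + 1)) w] at IH
    have eL2 : ((Finset.range w).filter fun j =>
        (j + 1 = 0 ∨ s (j + 1 + 1) < s (j + 1 - 1 + 1)) ∧ s (j + 1 + 1) = n (j + 1 + 1))
        = (Finset.range w).filter fun j => s (j + 1 + 1) < s (j + 1) ∧ s (j + 1 + 1) = n (j + 1 + 1) := by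
      apply Finset.filter_congr
      intro j _
      simp only [Nat.add_sub_cancel, Nat.succ_ne_zero, false_or]
    rw [eL2] at IH
    -- relate goal LHS tail to IH pieces via another shift
    rw [count_shift (fun j => s (j + 1) < s j ∧ s (j + 1) = n (j + 1)) w]
    -- now everything is heads + common tails
    set T := ((Finset.range w).filter fun j => s (j + 1 + 1) < s (j + 1) ∧ s (j + 1 + 1) = n (j + 1 + 1)).card with hT
    -- IH : head_ihl + T = RHS_ih + 1  where RHS_ih is the goal RHS tail
    have hs1 := hs 0
    have hn1 := hn 0
    have hns0 := hns 0
    have hns1 := hns (0 + 1)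
    split_ifs at IH ⊢ <;> omega
/-! ### Stage 3: subdiagrams, corners, skew columns -/

lemma mem_subDiagrams {η μ : YoungDiagram} : η ∈ subDiagrams μ ↔ η ≤ μ := by
  unfold subDiagrams
  simp only [Finset.mem_image, Finset.mem_attach, true_and, Subtype.exists]
  constructor
  · rintro ⟨s, hs, rfl⟩
    rw [Finset.mem_filter, Finset.mem_powerset] at hs
    rw [← YoungDiagram.cells_subset_iff]
    exact hs.1
  · intro h
    refine ⟨η.cells, ?_, ?_⟩
    · rw [Finset.mem_filter, Finset.mem_powerset]
      exact ⟨YoungDiagram.cells_subset_iff.mpr h, η.isLowerSet⟩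
    · cases η; rfl

lemma corners_eq (ν : YoungDiagram) (W : ℕ) (hW : ν.rowLen 0 ≤ W) :
    corners ν = (CCF ν W).image fun j => (ν.colLen j - 1, j) := by
  ext x
  simp only [corners, Finset.mem_filter, Finset.mem_image, YoungDiagram.mem_cells, mem_CCF]
  constructor
  · rintro ⟨hx, hx1, hx2⟩
    have hxc : x.1 < ν.colLen x.2 := YoungDiagram.mem_iff_lt_colLen.mp (by simpa using hx)
    have hx1' : ¬ x.1 + 1 < ν.colLen x.2 := by
      rw [← YoungDiagram.mem_iff_lt_colLen]
      simpa using hx1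
    have hx2' : ¬ x.1 < ν.colLen (x.2 + 1) := by
      rw [← YoungDiagram.mem_iff_lt_colLen]
      simpa using hx2
    refine ⟨x.2, ⟨?_, ?_⟩, ?_⟩
    · have : 0 < ν.colLen x.2 := by omega
      have := lt_rowLen_of_colLen_pos this
      omega
    · unfold cornerCol; omega
    · have : x.1 = ν.colLen x.2 - 1 := by omega
      rw [← this]
  · rintro ⟨j, ⟨hj, hc⟩, rfl⟩
    have hpos : 0 < ν.colLen j := by unfold cornerCol at hc; omega
    have hc' : ν.colLen (j + 1) < ν.colLen j := hc
    refine ⟨?_, ?_, ?_⟩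
    · simpa using corner_box_mem hc
    · show (ν.colLen j - 1 + 1, j) ∉ ν
      rw [YoungDiagram.mem_iff_lt_colLen]
      omega
    · show (ν.colLen j - 1, j + 1) ∉ ν
      rw [YoungDiagram.mem_iff_lt_colLen]
      omega

lemma numCorners_eq {ν : YoungDiagram} {W : ℕ} (hW : ν.rowLen 0 ≤ W) :
    numCorners ν = (CCF ν W).card := by
  rw [numCorners, corners_eq ν W hW]
  apply Finset.card_image_of_injOn
  intro j1 _ j2 _ h
  exact congrArg Prod.snd h

lemma skewCols_eq_card (ν σ : YoungDiagram) (W : ℕ) (h : ν ≤ σ)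
    (hz : ∀ l, W ≤ l → σ.colLen l = 0) :
    skewCols ν σ = ((Finset.range W).filter fun j => ν.colLen j < σ.colLen j).card := by
  unfold skewCols skewCells
  congr 1
  ext j
  simp only [Finset.mem_image, Finset.mem_sdiff, YoungDiagram.mem_cells, Finset.mem_filter,
    Finset.mem_range]
  constructor
  · rintro ⟨⟨r, j'⟩, ⟨h1, h2⟩, rfl⟩
    dsimp only
    have h1' : r < σ.colLen j' := YoungDiagram.mem_iff_lt_colLen.mp h1
    have h2' : ¬ r < ν.colLen j' := fun hcon => h2 (YoungDiagram.mem_iff_lt_colLen.mpr hcon)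
    constructor
    · by_contra hcon
      have := hz j' (by omega)
      omega
    · omega
  · rintro ⟨hjW, hlt⟩
    exact ⟨(ν.colLen j, j), ⟨YoungDiagram.mem_iff_lt_colLen.mpr hlt,
      fun hcon => by have := YoungDiagram.mem_iff_lt_colLen.mp hcon; omega⟩, rfl⟩

lemma skewCols_addBox {ν σ : YoungDiagram} {j : ℕ} (hνσ : ν ≤ σ) (ha : addableCol σ j) :
    skewCols ν (addBox σ j)
      = skewCols ν σ + if σ.colLen j = ν.colLen j then 1 else 0 := by
  set W := σ.rowLen 0 + j + 1 with hWdef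
  have hzσ : ∀ l, W ≤ l → σ.colLen l = 0 := fun l hl => colLen_eq_zero (by omega)
  have hza : ∀ l, W ≤ l → (addBox σ j).colLen l = 0 := by
    intro l hl
    rw [colLen_addBox ha l, if_neg (by omega), hzσ l hl]
  rw [skewCols_eq_card ν σ W hνσ hzσ,
    skewCols_eq_card ν (addBox σ j) W (hνσ.trans (le_addBox σ j)) hza]
  have hmono := colLen_le_of_le hνσ j
  by_cases he : σ.colLen j = ν.colLen j
  · rw [if_pos he]
    have hins : ((Finset.range W).filter fun l => ν.colLen l < (addBox σ j).colLen l)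
        = insert j ((Finset.range W).filter fun l => ν.colLen l < σ.colLen l) := by
      ext l
      simp only [Finset.mem_insert, Finset.mem_filter, Finset.mem_range]
      rw [colLen_addBox ha l]
      by_cases hl : l = j
      · rw [if_pos hl, hl]
        constructor
        · intro _
          exact Or.inl rfl
        · intro _
          exact ⟨by omega, by omega⟩
      · rw [if_neg hl]
        constructor
        · rintro ⟨h1, h2⟩
          exact Or.inr ⟨h1, by omega⟩
        · rintro (hcon | ⟨h1, h2⟩)
          · exact absurd hcon hl
          · exact ⟨h1, by omega⟩
    rw [hins, Finset.card_insert_of_notMem (by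
      rw [Finset.mem_filter]
      push_neg
      intro
      omega)]
  · rw [if_neg he]
    rw [Nat.add_zero]
    congr 1
    apply Finset.filter_congr
    intro l _
    rw [colLen_addBox ha l]
    by_cases hl : l = j
    · rw [if_pos hl, hl]
      constructor <;> intro <;> omega
    · rw [if_neg hl]
      omega

lemma skewCols_delBox {ν σ : YoungDiagram} {j : ℕ} (hνσ : ν ≤ σ) (hc : cornerCol ν j) :
    skewCols (delBox ν j) σ
      = skewCols ν σ + if σ.colLen j = ν.colLen j then 1 else 0 := by
  have hpos : 0 < ν.colLen j := by unfold cornerCol at hc; omega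
  set W := σ.rowLen 0 + j + 1 with hWdef
  have hzσ : ∀ l, W ≤ l → σ.colLen l = 0 := fun l hl => colLen_eq_zero (by omega)
  rw [skewCols_eq_card ν σ W hνσ hzσ,
    skewCols_eq_card (delBox ν j) σ W ((delBox_le ν j).trans hνσ) hzσ]
  have hmono := colLen_le_of_le hνσ j
  by_cases he : σ.colLen j = ν.colLen j
  · rw [if_pos he]
    have hins : ((Finset.range W).filter fun l => (delBox ν j).colLen l < σ.colLen l)
        = insert j ((Finset.range W).filter fun l => ν.colLen l < σ.colLen l) := by
      ext l
      simp only [Finset.mem_insert, Finset.mem_filter, Finset.mem_range]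
      rw [colLen_delBox hc l]
      by_cases hl : l = j
      · rw [if_pos hl, hl]
        constructor
        · intro _
          exact Or.inl rfl
        · intro _
          exact ⟨by omega, by omega⟩
      · rw [if_neg hl]
        constructor
        · rintro ⟨h1, h2⟩
          exact Or.inr ⟨h1, by omega⟩
        · rintro (hcon | ⟨h1, h2⟩)
          · exact absurd hcon hl
          · exact ⟨h1, by omega⟩
    rw [hins, Finset.card_insert_of_notMem (by
      rw [Finset.mem_filter]
      push_neg
      intro
      omega)]
  · rw [if_neg he]
    rw [Nat.add_zero]
    congr 1
    apply Finset.filter_congr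
    intro l _
    rw [colLen_delBox hc l]
    by_cases hl : l = j
    · rw [if_pos hl, hl]
      constructor <;> intro <;> omega
    · rw [if_neg hl]
      omega
/-! ### Stage 4: the key coefficient identity -/

lemma count_A1C1 (ν σ : YoungDiagram) (hνσ : ν ≤ σ) (w : ℕ) (hw : σ.rowLen 0 ≤ w) :
    ((Finset.range (w + 1)).filter fun j => addableCol σ j ∧ σ.colLen j = ν.colLen j).card
      = ((Finset.range (w + 1)).filter fun j => cornerCol ν j ∧ σ.colLen j = ν.colLen j).card
        + 1 := by
  have h := seq_key w σ.colLen ν.colLen (fun j => σ.colLen_anti _ _ (Nat.le_succ j))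
    (fun j => ν.colLen_anti _ _ (Nat.le_succ j)) (colLen_le_of_le hνσ)
    (fun j hj => colLen_eq_zero (le_trans hw hj))
  have eA : ((Finset.range (w + 1)).filter fun j =>
      addableCol σ j ∧ σ.colLen j = ν.colLen j)
      = (Finset.range (w + 1)).filter fun j =>
        (j = 0 ∨ σ.colLen j < σ.colLen (j - 1)) ∧ σ.colLen j = ν.colLen j := by
    ext j
    rw [Finset.mem_filter, Finset.mem_filter]
    exact Iff.rfl
  have eC : ((Finset.range (w + 1)).filter fun j =>
      cornerCol ν j ∧ σ.colLen j = ν.colLen j)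
      = (Finset.range (w + 1)).filter fun j =>
        ν.colLen (j + 1) < ν.colLen j ∧ σ.colLen j = ν.colLen j := by
    ext j
    rw [Finset.mem_filter, Finset.mem_filter]
    exact Iff.rfl
  rw [eA, eC]
  exact h

lemma count_AC (σ : YoungDiagram) (w : ℕ) (hw : σ.rowLen 0 ≤ w) :
    (ACF σ (w + 1)).card = numCorners σ + 1 := by
  have h := count_A1C1 σ σ le_rfl w hw
  have e1 : ((Finset.range (w + 1)).filter fun j => addableCol σ j ∧ σ.colLen j = σ.colLen j)
      = ACF σ (w + 1) := by
    apply Finset.filter_congr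
    intro j _
    simp
  have e2 : ((Finset.range (w + 1)).filter fun j => cornerCol σ j ∧ σ.colLen j = σ.colLen j)
      = CCF σ (w + 1) := by
    apply Finset.filter_congr
    intro j _
    simp
  rw [e1, e2] at h
  rw [h, numCorners_eq (W := w + 1) (by omega)]

lemma lemA {R : Type*} [CommRing R] (t : R) (ν σ : YoungDiagram) (hνσ : ν ≤ σ)
    (w : ℕ) (hw : σ.rowLen 0 ≤ w) :
    t ^ (skewCols ν σ + 1) + ((numCorners σ : ℤ) - (numCorners ν : ℤ)) • t ^ skewCols ν σ
      + ∑ j ∈ Finset.range (w + 1),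
          (if cornerCol ν j then t ^ skewCols (delBox ν j) σ else 0)
      = ∑ j ∈ Finset.range (w + 1),
          (if addableCol σ j then t ^ skewCols ν (addBox σ j) else 0) := by
  have hwv : ν.rowLen 0 ≤ w := le_trans (rowLen_le_of_le hνσ 0) hw
  set K := skewCols ν σ with hK
  -- split both indicator sums according to σ.colLen j = ν.colLen j
  have eL : ∀ j ∈ Finset.range (w + 1),
      (if cornerCol ν j then t ^ skewCols (delBox ν j) σ else 0)
        = (if cornerCol ν j ∧ σ.colLen j = ν.colLen j then t ^ (K + 1) else 0)
          + (if cornerCol ν j ∧ ¬ σ.colLen j = ν.colLen j then t ^ K else 0) := by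
    intro j _
    by_cases hc : cornerCol ν j
    · rw [if_pos hc, skewCols_delBox hνσ hc]
      by_cases he : σ.colLen j = ν.colLen j
      · rw [if_pos he, if_pos (⟨hc, he⟩ : cornerCol ν j ∧ σ.colLen j = ν.colLen j),
          if_neg (fun hcon => hcon.2 he), add_zero]
      · rw [if_neg he, Nat.add_zero, if_neg (fun hcon : _ ∧ _ => he hcon.2),
          if_pos (⟨hc, he⟩ : cornerCol ν j ∧ ¬ σ.colLen j = ν.colLen j), zero_add]
    · rw [if_neg hc, if_neg (fun hcon : _ ∧ _ => hc hcon.1),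
        if_neg (fun hcon : _ ∧ _ => hc hcon.1), add_zero]
  have eR : ∀ j ∈ Finset.range (w + 1),
      (if addableCol σ j then t ^ skewCols ν (addBox σ j) else 0)
        = (if addableCol σ j ∧ σ.colLen j = ν.colLen j then t ^ (K + 1) else 0)
          + (if addableCol σ j ∧ ¬ σ.colLen j = ν.colLen j then t ^ K else 0) := by
    intro j _
    by_cases hc : addableCol σ j
    · rw [if_pos hc, skewCols_addBox hνσ hc]
      by_cases he : σ.colLen j = ν.colLen j
      · rw [if_pos he, if_pos (⟨hc, he⟩ : addableCol σ j ∧ σ.colLen j = ν.colLen j),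
          if_neg (fun hcon => hcon.2 he), add_zero]
      · rw [if_neg he, Nat.add_zero, if_neg (fun hcon : _ ∧ _ => he hcon.2),
          if_pos (⟨hc, he⟩ : addableCol σ j ∧ ¬ σ.colLen j = ν.colLen j), zero_add]
    · rw [if_neg hc, if_neg (fun hcon : _ ∧ _ => hc hcon.1),
        if_neg (fun hcon : _ ∧ _ => hc hcon.1), add_zero]
  rw [Finset.sum_congr rfl eL, Finset.sum_congr rfl eR, Finset.sum_add_distrib,
    Finset.sum_add_distrib]
  rw [← Finset.sum_filter, ← Finset.sum_filter, ← Finset.sum_filter, ← Finset.sum_filter]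
  rw [Finset.sum_const, Finset.sum_const, Finset.sum_const, Finset.sum_const]
  -- cardinalities
  set C1 := ((Finset.range (w + 1)).filter fun j =>
    cornerCol ν j ∧ σ.colLen j = ν.colLen j).card with hC1
  set C0 := ((Finset.range (w + 1)).filter fun j =>
    cornerCol ν j ∧ ¬ σ.colLen j = ν.colLen j).card with hC0
  set A1 := ((Finset.range (w + 1)).filter fun j =>
    addableCol σ j ∧ σ.colLen j = ν.colLen j).card with hA1
  set A0 := ((Finset.range (w + 1)).filter fun j =>
    addableCol σ j ∧ ¬ σ.colLen j = ν.colLen j).card with hA0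
  have key : A1 = C1 + 1 := count_A1C1 ν σ hνσ w hw
  have hAtot : A1 + A0 = numCorners σ + 1 := by
    rw [← count_AC σ w hw, hA1, hA0, ACF]
    rw [← Finset.filter_filter, ← Finset.filter_filter]
    exact Finset.card_filter_add_card_filter_not _
  have hCtot : C1 + C0 = numCorners ν := by
    rw [numCorners_eq (W := w + 1) (by omega), CCF, hC1, hC0]
    rw [← Finset.filter_filter, ← Finset.filter_filter]
    exact Finset.card_filter_add_card_filter_not _
  -- now pure algebra
  have e1 : (A1 : R) = (C1 : R) + 1 := by exact_mod_cast congrArg (Nat.cast (R := R)) key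
  have e2 : (A1 : R) + (A0 : R) = (numCorners σ : R) + 1 := by
    exact_mod_cast congrArg (Nat.cast (R := R)) hAtot
  have e3 : (C1 : R) + (C0 : R) = (numCorners ν : R) := by
    exact_mod_cast congrArg (Nat.cast (R := R)) hCtot
  simp only [nsmul_eq_mul, zsmul_eq_mul]
  push_cast
  linear_combination (t ^ K - t ^ (K + 1)) * e1 - (t ^ K) * e2 + (t ^ K) * e3
/-! ### Stage 5: the complementary case and full coefficient identity -/

section Pj

variable {ν σ : YoungDiagram} {j : ℕ}

/-- `P j`: the skew `ν/σ` consists of precisely the single box `(σ.colLen j, j)`. -/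
def Pj (ν σ : YoungDiagram) (j : ℕ) : Prop :=
  ν.cells \ σ.cells = {(σ.colLen j, j)}

lemma Pj.mem (hP : Pj ν σ j) : (σ.colLen j, j) ∈ ν ∧ (σ.colLen j, j) ∉ σ := by
  have : (σ.colLen j, j) ∈ ν.cells \ σ.cells := by
    rw [hP]; exact Finset.mem_singleton_self _
  rw [Finset.mem_sdiff, YoungDiagram.mem_cells, YoungDiagram.mem_cells] at this
  exact this

lemma Pj.mem_of_ne {x : ℕ × ℕ} (hP : Pj ν σ j) (hx : x ∈ ν) (hne : x ≠ (σ.colLen j, j)) :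
    x ∈ σ := by
  by_contra hcon
  have : x ∈ ν.cells \ σ.cells := by
    rw [Finset.mem_sdiff, YoungDiagram.mem_cells, YoungDiagram.mem_cells]
    exact ⟨hx, hcon⟩
  rw [hP, Finset.mem_singleton] at this
  exact hne this

lemma Pj.colLen_nu (hP : Pj ν σ j) : ν.colLen j = σ.colLen j + 1 := by
  obtain ⟨h1, h2⟩ := hP.mem
  have hlt : σ.colLen j < ν.colLen j := YoungDiagram.mem_iff_lt_colLen.mp h1
  have hle : ¬ (σ.colLen j + 1 < ν.colLen j) := by
    intro hcon
    have hmem : (σ.colLen j + 1, j) ∈ ν := YoungDiagram.mem_iff_lt_colLen.mpr hcon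
    have := hP.mem_of_ne hmem (by
      intro hcon2
      have := congrArg Prod.fst hcon2
      simp at this)
    rw [YoungDiagram.mem_iff_lt_colLen] at this
    omega
  omega

lemma Pj.addable (hP : Pj ν σ j) : addableCol σ j := by
  obtain ⟨h1, h2⟩ := hP.mem
  rcases Nat.eq_zero_or_pos j with hj | hj
  · exact Or.inl hj
  · right
    have hmem : (σ.colLen j, j - 1) ∈ ν :=
      mem_of_le_of_mem (by constructor <;> simp <;> omega) h1
    have : (σ.colLen j, j - 1) ∈ σ := hP.mem_of_ne hmem (by
      intro hcon
      have := congrArg Prod.snd hcon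
      simp only at this
      omega)
    rw [YoungDiagram.mem_iff_lt_colLen] at this
    omega

lemma Pj.nu_le (hP : Pj ν σ j) : ν ≤ addBox σ j := by
  intro x hx
  rw [mem_addBox hP.addable]
  by_cases hne : x = (σ.colLen j, j)
  · exact Or.inl hne
  · exact Or.inr (hP.mem_of_ne hx hne)

lemma Pj.corner (hP : Pj ν σ j) : cornerCol ν j := by
  obtain ⟨h1, h2⟩ := hP.mem
  unfold cornerCol
  rw [hP.colLen_nu]
  have : ¬ (σ.colLen j, j + 1) ∈ ν := by
    intro hcon
    have hne : (σ.colLen j, j + 1) ≠ (σ.colLen j, j) := by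
      intro hcon2
      have := congrArg Prod.snd hcon2
      simp at this
    have hmem := hP.mem_of_ne hcon hne
    exact h2 (mem_of_le_of_mem (by constructor <;> simp) hmem)
  rw [YoungDiagram.mem_iff_lt_colLen] at this
  omega

lemma Pj.delBox_le (hP : Pj ν σ j) : delBox ν j ≤ σ := by
  intro x hx
  rw [mem_delBox hP.corner] at hx
  obtain ⟨hne, hx⟩ := hx
  apply hP.mem_of_ne hx
  rw [hP.colLen_nu] at hne
  simpa using hne

lemma Pj.cells_eq (hP : Pj ν σ j) :
    skewCells (delBox ν j) σ = skewCells ν (addBox σ j) := by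
  obtain ⟨h1, h2⟩ := hP.mem
  unfold skewCells
  rw [delBox_cells hP.corner, addBox_cells hP.addable, hP.colLen_nu]
  have hbb : ((σ.colLen j + 1 - 1, j) : ℕ × ℕ) = (σ.colLen j, j) := by simp
  rw [hbb]
  ext x
  rw [Finset.mem_sdiff, Finset.mem_sdiff, Finset.mem_erase, Finset.mem_insert]
  constructor
  · rintro ⟨hxσ, hx⟩
    push_neg at hx
    have hxb : x ≠ (σ.colLen j, j) := by
      intro hcon
      subst hcon
      exact h2 ((YoungDiagram.mem_cells _).mp hxσ)
    exact ⟨Or.inr hxσ, hx hxb⟩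
  · rintro ⟨hxor, hxν⟩
    have hxb : x ≠ (σ.colLen j, j) := by
      intro hcon
      subst hcon
      exact hxν ((YoungDiagram.mem_cells _).mpr h1)
    rcases hxor with hcon | hxσ
    · exact absurd hcon hxb
    · exact ⟨hxσ, fun hc => absurd hc.2 hxν⟩

lemma pj_of_FR (hns : ¬ ν ≤ σ) (ha : addableCol σ j) (hle : ν ≤ addBox σ j) :
    Pj ν σ j := by
  unfold Pj
  have hsub : ν.cells \ σ.cells ⊆ {(σ.colLen j, j)} := by
    intro x hx
    rw [Finset.mem_sdiff] at hx
    obtain ⟨hx1, hx2⟩ := hx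
    have := hle hx1
    rw [mem_addBox ha] at this
    rcases this with h | h
    · simpa using h
    · exact absurd ((YoungDiagram.mem_cells _).mpr h) hx2
  have hne : (ν.cells \ σ.cells).Nonempty := by
    rw [Finset.sdiff_nonempty]
    intro hcon
    exact hns (YoungDiagram.cells_subset_iff.mp hcon)
  rwa [Finset.Nonempty.subset_singleton_iff hne] at hsub

lemma pj_of_FL (hns : ¬ ν ≤ σ) (hc : cornerCol ν j) (hle : delBox ν j ≤ σ) :
    Pj ν σ j := by
  have hpos : 0 < ν.colLen j := by unfold cornerCol at hc; omega
  -- first: ν \ σ ⊆ {(ν.colLen j - 1, j)}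
  have hsub : ν.cells \ σ.cells ⊆ {(ν.colLen j - 1, j)} := by
    intro x hx
    rw [Finset.mem_sdiff] at hx
    obtain ⟨hx1, hx2⟩ := hx
    rw [Finset.mem_singleton]
    by_contra hne
    have : x ∈ delBox ν j := by
      rw [mem_delBox hc]
      exact ⟨hne, (YoungDiagram.mem_cells _).mp hx1⟩
    exact hx2 (YoungDiagram.cells_subset_iff.mpr hle (by rwa [← YoungDiagram.mem_cells _] at this))
  have hne : (ν.cells \ σ.cells).Nonempty := by
    rw [Finset.sdiff_nonempty]
    intro hcon
    exact hns (YoungDiagram.cells_subset_iff.mp hcon)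
  rw [Finset.Nonempty.subset_singleton_iff hne] at hsub
  -- identify σ.colLen j = ν.colLen j - 1
  have hb : (ν.colLen j - 1, j) ∈ ν.cells \ σ.cells := by
    rw [hsub]; exact Finset.mem_singleton_self _
  rw [Finset.mem_sdiff] at hb
  have hbσ : ¬ (ν.colLen j - 1, j) ∈ σ := fun h => hb.2 ((YoungDiagram.mem_cells _).mpr h)
  have hup : σ.colLen j ≤ ν.colLen j - 1 := by
    by_contra hcon
    push_neg at hcon
    exact hbσ (YoungDiagram.mem_iff_lt_colLen.mpr hcon)
  have hdown : ν.colLen j - 1 ≤ σ.colLen j := by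
    rcases Nat.eq_zero_or_pos (ν.colLen j - 1) with h | h
    · omega
    · by_contra hcon
      push_neg at hcon
      have hmem : (ν.colLen j - 1 - 1, j) ∈ delBox ν j := by
        rw [mem_delBox hc]
        constructor
        · intro hcon2
          have := congrArg Prod.fst hcon2
          simp only at this
          omega
        · rw [YoungDiagram.mem_iff_lt_colLen]
          omega
      have := YoungDiagram.cells_subset_iff.mpr hle (by rwa [YoungDiagram.mem_cells])
      rw [YoungDiagram.mem_cells, YoungDiagram.mem_iff_lt_colLen] at this
      omega
  have heq : σ.colLen j = ν.colLen j - 1 := le_antisymm hup hdown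
  unfold Pj
  rw [hsub, heq]

end Pj

lemma coeff_id {R : Type*} [CommRing R] (t : R) (ν μ σ : YoungDiagram)
    (hσ : σ ≤ μ) (w : ℕ) (hw : μ.rowLen 0 ≤ w) :
    (if ν ≤ σ then
        t ^ (skewCols ν σ + 1)
          + ((numCorners σ : ℤ) - (numCorners ν : ℤ)) • t ^ skewCols ν σ
      else 0)
      + ∑ j ∈ Finset.range (w + 1),
          (if cornerCol ν j ∧ delBox ν j ≤ σ then t ^ skewCols (delBox ν j) σ else 0)
      = ∑ j ∈ Finset.range (w + 1),
          (if addableCol σ j ∧ ν ≤ addBox σ j then t ^ skewCols ν (addBox σ j) else 0) := by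
  by_cases hns : ν ≤ σ
  · rw [if_pos hns]
    have eL : ∀ j ∈ Finset.range (w + 1),
        (if cornerCol ν j ∧ delBox ν j ≤ σ then t ^ skewCols (delBox ν j) σ else 0)
          = (if cornerCol ν j then t ^ skewCols (delBox ν j) σ else 0) := by
      intro j _
      by_cases hc : cornerCol ν j
      · rw [if_pos hc, if_pos ⟨hc, (delBox_le ν j).trans hns⟩]
      · rw [if_neg hc, if_neg (fun hcon : _ ∧ _ => hc hcon.1)]
    have eR : ∀ j ∈ Finset.range (w + 1),
        (if addableCol σ j ∧ ν ≤ addBox σ j then t ^ skewCols ν (addBox σ j) else 0)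
          = (if addableCol σ j then t ^ skewCols ν (addBox σ j) else 0) := by
      intro j _
      by_cases hc : addableCol σ j
      · rw [if_pos hc, if_pos ⟨hc, hns.trans (le_addBox σ j)⟩]
      · rw [if_neg hc, if_neg (fun hcon : _ ∧ _ => hc hcon.1)]
    rw [Finset.sum_congr rfl eL, Finset.sum_congr rfl eR]
    exact lemA t ν σ hns w (le_trans (rowLen_le_of_le hσ 0) hw)
  · rw [if_neg hns, zero_add]
    apply Finset.sum_congr rfl
    intro j _
    by_cases hQ : addableCol σ j ∧ ν ≤ addBox σ j
    · have hP : Pj ν σ j := pj_of_FR hns hQ.1 hQ.2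
      have hcols : skewCols (delBox ν j) σ = skewCols ν (addBox σ j) :=
        congrArg (fun S => (S.image Prod.snd).card) hP.cells_eq
      rw [if_pos hQ, if_pos ⟨hP.corner, hP.delBox_le⟩, hcols]
    · rw [if_neg hQ]
      have : ¬ (cornerCol ν j ∧ delBox ν j ≤ σ) := by
        intro hcon
        have hP : Pj ν σ j := pj_of_FL hns hcon.1 hcon.2
        exact hQ ⟨hP.addable, hP.nu_le⟩
      rw [if_neg this]
/-! ### Stage 6: basic values of `gC` and the branching lemma -/

lemma yd_ext {a b : YoungDiagram} (h : a.cells = b.cells) : a = b := by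
  cases a; cases b; simpa using h

lemma gC_empty (n : ℕ) : gC n (∅ : Finset (ℕ × ℕ)) = 1 := by
  unfold gC
  haveI : IsEmpty (↥(∅ : Finset (ℕ × ℕ))) := ⟨fun c => Finset.notMem_empty _ c.2⟩
  have hU : (Finset.univ : Finset (↥(∅ : Finset (ℕ × ℕ)) → Fin n)).filter RPP
      = Finset.univ := by
    apply Finset.filter_true_of_mem
    intro T _
    exact ⟨fun c => (IsEmpty.false c).elim, fun c => (IsEmpty.false c).elim⟩
  rw [hU]
  have hw : ∀ T : ↥(∅ : Finset (ℕ × ℕ)) → Fin n,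
      ∏ i, (MvPolynomial.X i : MvPolynomial (Fin n) ℤ) ^ ccnt T i = 1 := by
    intro T
    apply Finset.prod_eq_one
    intro i _
    have hc : ccnt T i = 0 := by
      unfold ccnt
      rw [Finset.univ_eq_empty, Finset.filter_empty, Finset.image_empty, Finset.card_empty]
    rw [hc, pow_zero]
  rw [Finset.sum_congr rfl fun T _ => hw T, Finset.sum_const, Finset.card_univ]
  haveI : Unique (↥(∅ : Finset (ℕ × ℕ)) → Fin n) := Pi.uniqueOfIsEmpty _
  rw [Fintype.card_unique, one_smul]

lemma gC_of_nonempty {S : Finset (ℕ × ℕ)} (hS : S.Nonempty) : gC 0 S = 0 := by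
  unfold gC
  haveI : Nonempty ↥S := ⟨⟨hS.choose, hS.choose_spec⟩⟩
  haveI : IsEmpty (↥S → Fin 0) := inferInstance
  rw [Finset.univ_eq_empty, Finset.filter_empty, Finset.sum_empty]

lemma skewCells_self (ν : YoungDiagram) : skewCells ν ν = ∅ := Finset.sdiff_self _

lemma skewCells_nonempty {ν μ : YoungDiagram} (h : ν ≤ μ) (hne : ν ≠ μ) :
    (skewCells ν μ).Nonempty := by
  unfold skewCells
  rw [Finset.sdiff_nonempty]
  intro hcon
  exact hne (le_antisymm h (YoungDiagram.cells_subset_iff.mp hcon))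

lemma gC_single (n : ℕ) :
    gC n ({(0, 0)} : Finset (ℕ × ℕ)) = ∑ i : Fin n, MvPolynomial.X i := by
  haveI hu : Unique (↥({(0, 0)} : Finset (ℕ × ℕ))) := by
    refine ⟨⟨⟨(0, 0), Finset.mem_singleton_self _⟩⟩, ?_⟩
    rintro ⟨x, hx⟩
    rw [Finset.mem_singleton] at hx
    exact Subtype.ext hx
  unfold gC
  have hU : (Finset.univ : Finset (↥({(0, 0)} : Finset (ℕ × ℕ)) → Fin n)).filter RPP
      = Finset.univ := by
    apply Finset.filter_true_of_mem
    intro T _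
    constructor <;> (intro c c' _ _; rw [Subsingleton.elim c c'])
  rw [hU]
  have hw : ∀ T : ↥({(0, 0)} : Finset (ℕ × ℕ)) → Fin n,
      ∏ i, (MvPolynomial.X i : MvPolynomial (Fin n) ℤ) ^ ccnt T i
        = MvPolynomial.X (T default) := by
    intro T
    have hccnt : ∀ i, ccnt T i = if T default = i then 1 else 0 := by
      intro i
      unfold ccnt
      rw [Finset.univ_unique, Finset.filter_singleton]
      by_cases h : T default = i
      · rw [if_pos h, if_pos h, Finset.image_singleton, Finset.card_singleton]
      · rw [if_neg h, if_neg h, Finset.image_empty, Finset.card_empty]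
    rw [Finset.prod_congr rfl fun i _ => by rw [hccnt i, pow_ite, pow_one, pow_zero]]
    rw [Finset.prod_ite_eq]
    rw [if_pos (Finset.mem_univ _)]
  rw [Finset.sum_congr rfl fun T _ => hw T]
  exact Fintype.sum_equiv (Equiv.funUnique (↥({(0, 0)} : Finset (ℕ × ℕ))) (Fin n)) _ _
    (fun T => rfl)

/-! #### The branching bijection -/

section Branch

variable {m : ℕ} {ν μ κ : YoungDiagram}

/-- glue a tableau on `μ/κ` with the all-zero filling of `κ/ν` -/
def glueFun (ν μ κ : YoungDiagram) (T' : ↥(skewCells κ μ) → Fin m)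
    (c : ↥(skewCells ν μ)) : Fin (m + 1) :=
  if hc : (c : ℕ × ℕ) ∈ κ.cells ∨ (c : ℕ × ℕ) ∉ μ.cells then 0
  else (T' ⟨c, by
    push_neg at hc
    exact Finset.mem_sdiff.mpr ⟨hc.2, hc.1⟩⟩).succ

lemma glueFun_mem {T' : ↥(skewCells κ μ) → Fin m} {c : ↥(skewCells ν μ)}
    (hc : (c : ℕ × ℕ) ∈ κ.cells) : glueFun ν μ κ T' c = 0 :=
  dif_pos (Or.inl hc)

lemma glueFun_not_mem {T' : ↥(skewCells κ μ) → Fin m} {c : ↥(skewCells ν μ)}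
    (hm : (c : ℕ × ℕ) ∈ skewCells κ μ) :
    glueFun ν μ κ T' c = (T' ⟨c, hm⟩).succ := by
  have h1 := Finset.mem_sdiff.mp hm
  rw [glueFun, dif_neg (by push_neg; exact ⟨h1.2, h1.1⟩)]

lemma mem_skewCells {ν μ : YoungDiagram} {x : ℕ × ℕ} :
    x ∈ skewCells ν μ ↔ x ∈ μ.cells ∧ x ∉ ν.cells := Finset.mem_sdiff

lemma mem_skew_mono {x : ℕ × ℕ} (hνκ : ν ≤ κ) (hκμ : κ ≤ μ)
    (hx : x ∈ skewCells κ μ) : x ∈ skewCells ν μ := by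
  rw [mem_skewCells] at hx ⊢
  exact ⟨hx.1, fun hcon => hx.2 (YoungDiagram.cells_subset_iff.mpr hνκ hcon)⟩

lemma glue_RPP (hκμ : κ ≤ μ) {T' : ↥(skewCells κ μ) → Fin m} (hT' : RPP T') :
    RPP (glueFun ν μ κ T') := by
  constructor
  · intro c c' h1 h2
    by_cases hc' : (c' : ℕ × ℕ) ∈ κ.cells
    · have hc : (c : ℕ × ℕ) ∈ κ.cells := by
        have : ((c : ℕ × ℕ)) ≤ (c' : ℕ × ℕ) := Prod.le_def.mpr ⟨le_of_eq h1, h2⟩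
        exact κ.isLowerSet this hc'
      rw [glueFun_mem hc, glueFun_mem hc']
    · have hm' : (c' : ℕ × ℕ) ∈ skewCells κ μ :=
        Finset.mem_sdiff.mpr ⟨(Finset.mem_sdiff.mp c'.2).1, hc'⟩
      rw [glueFun_not_mem hm']
      by_cases hc : (c : ℕ × ℕ) ∈ κ.cells
      · rw [glueFun_mem hc]
        exact Fin.zero_le _
      · have hm : (c : ℕ × ℕ) ∈ skewCells κ μ :=
          Finset.mem_sdiff.mpr ⟨(Finset.mem_sdiff.mp c.2).1, hc⟩
        rw [glueFun_not_mem hm, Fin.succ_le_succ_iff]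
        exact hT'.1 ⟨c, hm⟩ ⟨c', hm'⟩ h1 h2
  · intro c c' h1 h2
    by_cases hc' : (c' : ℕ × ℕ) ∈ κ.cells
    · have hc : (c : ℕ × ℕ) ∈ κ.cells := by
        have : ((c : ℕ × ℕ)) ≤ (c' : ℕ × ℕ) := Prod.le_def.mpr ⟨h2, le_of_eq h1⟩
        exact κ.isLowerSet this hc'
      rw [glueFun_mem hc, glueFun_mem hc']
    · have hm' : (c' : ℕ × ℕ) ∈ skewCells κ μ :=
        Finset.mem_sdiff.mpr ⟨(Finset.mem_sdiff.mp c'.2).1, hc'⟩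
      rw [glueFun_not_mem hm']
      by_cases hc : (c : ℕ × ℕ) ∈ κ.cells
      · rw [glueFun_mem hc]
        exact Fin.zero_le _
      · have hm : (c : ℕ × ℕ) ∈ skewCells κ μ :=
          Finset.mem_sdiff.mpr ⟨(Finset.mem_sdiff.mp c.2).1, hc⟩
        rw [glueFun_not_mem hm, Fin.succ_le_succ_iff]
        exact hT'.2 ⟨c, hm⟩ ⟨c', hm'⟩ h1 h2

/-- cells where the tableau vanishes, together with `ν` -/
def cutCells (ν μ : YoungDiagram) {m : ℕ} (T : ↥(skewCells ν μ) → Fin (m + 1)) :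
    Finset (ℕ × ℕ) :=
  ν.cells ∪ (Finset.univ.filter fun c : ↥(skewCells ν μ) => T c = 0).image Subtype.val

lemma mem_cutCells {T : ↥(skewCells ν μ) → Fin (m + 1)} {x : ℕ × ℕ} :
    x ∈ cutCells ν μ T ↔ x ∈ ν.cells ∨ ∃ h : x ∈ skewCells ν μ, T ⟨x, h⟩ = 0 := by
  unfold cutCells
  rw [Finset.mem_union]
  apply or_congr Iff.rfl
  constructor
  · intro hx
    rw [Finset.mem_image] at hx
    obtain ⟨a, haf, rfl⟩ := hx
    rw [Finset.mem_filter] at haf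
    exact ⟨a.2, haf.2⟩
  · rintro ⟨h, h0⟩
    rw [Finset.mem_image]
    exact ⟨⟨x, h⟩, Finset.mem_filter.mpr ⟨Finset.mem_univ _, h0⟩, rfl⟩

lemma cut_lower (hνμ : ν ≤ μ) {T : ↥(skewCells ν μ) → Fin (m + 1)} (hT : RPP T) :
    IsLowerSet (↑(cutCells ν μ T) : Set (ℕ × ℕ)) := by
  intro b a hab hb
  rw [Finset.mem_coe, mem_cutCells] at hb ⊢
  obtain ⟨hab1, hab2⟩ := Prod.le_def.mp hab
  rcases hb with hb | ⟨hbS, hb0⟩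
  · left
    rw [YoungDiagram.mem_cells] at hb ⊢
    exact mem_of_le_of_mem hab hb
  · by_cases haν : a ∈ ν.cells
    · exact Or.inl haν
    · right
      have hbμ : b ∈ μ.cells := (Finset.mem_sdiff.mp hbS).1
      have haμ : a ∈ μ.cells := by
        rw [YoungDiagram.mem_cells] at hbμ ⊢
        exact mem_of_le_of_mem hab hbμ
      have haS : a ∈ skewCells ν μ := Finset.mem_sdiff.mpr ⟨haμ, haν⟩
      refine ⟨haS, ?_⟩
      have hzμ : (a.1, b.2) ∈ μ.cells := by
        rw [YoungDiagram.mem_cells] at hbμ ⊢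
        exact mem_of_le_of_mem (Prod.le_def.mpr ⟨hab1, le_refl _⟩) hbμ
      by_cases hzν : (a.1, b.2) ∈ ν.cells
      · exfalso
        apply haν
        rw [YoungDiagram.mem_cells] at hzν ⊢
        exact mem_of_le_of_mem (show a ≤ (a.1, b.2) from Prod.le_def.mpr ⟨le_refl a.1, hab2⟩) hzν
      · have hzS : (a.1, b.2) ∈ skewCells ν μ := Finset.mem_sdiff.mpr ⟨hzμ, hzν⟩
        have h1 : T ⟨(a.1, b.2), hzS⟩ ≤ T ⟨b, hbS⟩ := hT.2 _ _ rfl hab1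
        have h2 : T ⟨a, haS⟩ ≤ T ⟨(a.1, b.2), hzS⟩ := hT.1 _ _ rfl hab2
        have := le_trans h2 (le_trans h1 (le_of_eq hb0))
        exact Fin.le_zero_iff.mp this

/-- the intermediate diagram cut out by the zero set of `T` -/
def cutKappa (hνμ : ν ≤ μ) {T : ↥(skewCells ν μ) → Fin (m + 1)} (hT : RPP T) :
    YoungDiagram :=
  ⟨cutCells ν μ T, cut_lower hνμ hT⟩

lemma nu_le_cutKappa (hνμ : ν ≤ μ) {T : ↥(skewCells ν μ) → Fin (m + 1)} (hT : RPP T) :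
    ν ≤ cutKappa hνμ hT := by
  rw [← YoungDiagram.cells_subset_iff]
  exact Finset.subset_union_left

lemma cutKappa_le_mu (hνμ : ν ≤ μ) {T : ↥(skewCells ν μ) → Fin (m + 1)} (hT : RPP T) :
    cutKappa hνμ hT ≤ μ := by
  rw [← YoungDiagram.cells_subset_iff]
  apply Finset.union_subset (YoungDiagram.cells_subset_iff.mpr hνμ)
  intro x hx
  rw [Finset.mem_image] at hx
  obtain ⟨a, _, rfl⟩ := hx
  exact (Finset.mem_sdiff.mp a.2).1

lemma mem_skew_of_cut (hνμ : ν ≤ μ) {T : ↥(skewCells ν μ) → Fin (m + 1)} (hT : RPP T)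
    {x : ℕ × ℕ} (hx : x ∈ skewCells (cutKappa hνμ hT) μ) :
    ∃ h : x ∈ skewCells ν μ, T ⟨x, h⟩ ≠ 0 := by
  rw [mem_skewCells] at hx
  obtain ⟨hxμ, hxk⟩ := hx
  rw [show (cutKappa hνμ hT).cells = cutCells ν μ T from rfl, mem_cutCells] at hxk
  push_neg at hxk
  obtain ⟨hxν, hxT⟩ := hxk
  have hxS : x ∈ skewCells ν μ := Finset.mem_sdiff.mpr ⟨hxμ, hxν⟩
  exact ⟨hxS, hxT hxS⟩

/-- the renormalized tableau on `μ/κ` -/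
def cutFun (hνμ : ν ≤ μ) {T : ↥(skewCells ν μ) → Fin (m + 1)} (hT : RPP T)
    (c : ↥(skewCells (cutKappa hνμ hT) μ)) : Fin m :=
  (T ⟨c, (mem_skew_of_cut hνμ hT c.2).choose⟩).pred (mem_skew_of_cut hνμ hT c.2).choose_spec

lemma cutFun_eq (hνμ : ν ≤ μ) {T : ↥(skewCells ν μ) → Fin (m + 1)} (hT : RPP T)
    (c : ↥(skewCells (cutKappa hνμ hT) μ)) (hS : (c : ℕ × ℕ) ∈ skewCells ν μ)
    (hne : T ⟨c, hS⟩ ≠ 0) : cutFun hνμ hT c = (T ⟨c, hS⟩).pred hne := rfl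

lemma pred_le_pred {k : ℕ} {a b : Fin (k + 1)} (ha : a ≠ 0) (hb : b ≠ 0) (h : a ≤ b) :
    a.pred ha ≤ b.pred hb := by
  rw [Fin.le_def] at h ⊢
  simp only [Fin.coe_pred]
  omega

lemma cut_RPP (hνμ : ν ≤ μ) {T : ↥(skewCells ν μ) → Fin (m + 1)} (hT : RPP T) :
    RPP (cutFun hνμ hT) := by
  constructor
  · intro c c' h1 h2
    unfold cutFun
    apply pred_le_pred
    exact hT.1 _ _ h1 h2
  · intro c c' h1 h2
    unfold cutFun
    apply pred_le_pred
    exact hT.2 _ _ h1 h2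

lemma ccnt_glue_zero (hνκ : ν ≤ κ) (hκμ : κ ≤ μ) (T' : ↥(skewCells κ μ) → Fin m) :
    ccnt (glueFun ν μ κ T') 0 = skewCols ν κ := by
  unfold ccnt skewCols
  congr 1
  ext j
  simp only [Finset.mem_image, Finset.mem_filter, Finset.mem_univ, true_and]
  constructor
  · rintro ⟨c, hc0, rfl⟩
    have hck : (c : ℕ × ℕ) ∈ κ.cells := by
      by_contra hcon
      have hm : (c : ℕ × ℕ) ∈ skewCells κ μ :=
        Finset.mem_sdiff.mpr ⟨(Finset.mem_sdiff.mp c.2).1, hcon⟩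
      rw [glueFun_not_mem hm] at hc0
      exact Fin.succ_ne_zero _ hc0
    exact ⟨(c : ℕ × ℕ), Finset.mem_sdiff.mpr ⟨hck, (Finset.mem_sdiff.mp c.2).2⟩, rfl⟩
  · rintro ⟨x, hx, rfl⟩
    rw [mem_skewCells] at hx
    have hxμ : x ∈ μ.cells := YoungDiagram.cells_subset_iff.mpr hκμ hx.1
    have hxS : x ∈ skewCells ν μ := Finset.mem_sdiff.mpr ⟨hxμ, hx.2⟩
    exact ⟨⟨x, hxS⟩, glueFun_mem hx.1, rfl⟩

lemma ccnt_glue_succ (hνκ : ν ≤ κ) (hκμ : κ ≤ μ) (T' : ↥(skewCells κ μ) → Fin m)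
    (i : Fin m) : ccnt (glueFun ν μ κ T') i.succ = ccnt T' i := by
  unfold ccnt
  congr 1
  ext j
  simp only [Finset.mem_image, Finset.mem_filter, Finset.mem_univ, true_and]
  constructor
  · rintro ⟨c, hc, rfl⟩
    by_cases hck : (c : ℕ × ℕ) ∈ κ.cells
    · rw [glueFun_mem hck] at hc
      exact absurd hc.symm (Fin.succ_ne_zero i)
    · have hm : (c : ℕ × ℕ) ∈ skewCells κ μ :=
        Finset.mem_sdiff.mpr ⟨(Finset.mem_sdiff.mp c.2).1, hck⟩
      rw [glueFun_not_mem hm] at hc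
      exact ⟨⟨c, hm⟩, Fin.succ_injective _ hc, rfl⟩
  · rintro ⟨c, hc, rfl⟩
    have hcS : (c : ℕ × ℕ) ∈ skewCells ν μ := mem_skew_mono hνκ hκμ c.2
    refine ⟨⟨c, hcS⟩, ?_, rfl⟩
    rw [glueFun_not_mem (ν := ν) (c := (⟨(c : ℕ × ℕ), hcS⟩ : ↥(skewCells ν μ))) c.2]
    exact congrArg Fin.succ hc

lemma sigma_eq_of {μ : YoungDiagram} {m : ℕ} {κ₁ κ₂ : YoungDiagram}
    {T₁ : ↥(skewCells κ₁ μ) → Fin m} {T₂ : ↥(skewCells κ₂ μ) → Fin m}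
    (h : κ₁ = κ₂)
    (hv : ∀ x (hx1 : x ∈ skewCells κ₁ μ) (hx2 : x ∈ skewCells κ₂ μ),
      T₁ ⟨x, hx1⟩ = T₂ ⟨x, hx2⟩) :
    (⟨κ₁, T₁⟩ : Σ κ : YoungDiagram, ↥(skewCells κ μ) → Fin m) = ⟨κ₂, T₂⟩ := by
  subst h
  exact congrArg (Sigma.mk κ₁) (funext fun c => hv c c.2 c.2)

theorem gC_branch (m : ℕ) (ν μ : YoungDiagram) (hνμ : ν ≤ μ) :
    gC (m + 1) (skewCells ν μ)
      = ∑ κ ∈ (subDiagrams μ).filter (fun κ => ν ≤ κ),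
          (MvPolynomial.X 0 : MvPolynomial (Fin (m + 1)) ℤ) ^ skewCols ν κ
            * MvPolynomial.rename Fin.succ (gC m (skewCells κ μ)) := by
  have hrename : ∀ κ : YoungDiagram,
      MvPolynomial.rename Fin.succ (gC m (skewCells κ μ))
        = ∑ T' ∈ Finset.univ.filter (RPP (n := m) (S := skewCells κ μ)),
            ∏ i : Fin m, (MvPolynomial.X i.succ : MvPolynomial (Fin (m + 1)) ℤ) ^ ccnt T' i := by
    intro κ
    unfold gC
    rw [map_sum]
    refine Finset.sum_congr rfl fun T' _ => ?_
    rw [map_prod]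
    exact Finset.prod_congr rfl fun i _ => by rw [map_pow, MvPolynomial.rename_X]
  rw [Finset.sum_congr rfl fun κ _ => by rw [hrename κ, Finset.mul_sum]]
  rw [Finset.sum_sigma']
  unfold gC
  rw [Finset.sum_congr rfl fun T (_ : T ∈ _) =>
    Fin.prod_univ_succ fun i => (MvPolynomial.X i : MvPolynomial (Fin (m + 1)) ℤ) ^ ccnt T i]
  -- the two inverse maps, as facts
  have hglue_eq : ∀ (T : ↥(skewCells ν μ) → Fin (m + 1)) (hT : RPP T),
      glueFun ν μ (cutKappa hνμ hT) (cutFun hνμ hT) = T := by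
    intro T hT
    funext c
    by_cases hck : (c : ℕ × ℕ) ∈ (cutKappa hνμ hT).cells
    · rw [glueFun_mem hck]
      rcases mem_cutCells.mp hck with hν | ⟨hS, h0⟩
      · exact ((Finset.mem_sdiff.mp c.2).2 hν).elim
      · exact h0.symm
    · have hm : (c : ℕ × ℕ) ∈ skewCells (cutKappa hνμ hT) μ :=
        Finset.mem_sdiff.mpr ⟨(Finset.mem_sdiff.mp c.2).1, hck⟩
      rw [glueFun_not_mem hm]
      have hS : (c : ℕ × ℕ) ∈ skewCells ν μ := c.2
      have hne : T ⟨c, hS⟩ ≠ 0 := fun h0 => hck (mem_cutCells.mpr (Or.inr ⟨hS, h0⟩))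
      rw [cutFun_eq hνμ hT ⟨c, hm⟩ hS hne]
      exact Fin.succ_pred _ _
  have hcut_glue : ∀ (κ : YoungDiagram) (hνκ : ν ≤ κ) (hκμ : κ ≤ μ)
      (T' : ↥(skewCells κ μ) → Fin m) (hg : RPP (glueFun ν μ κ T')),
      cutKappa hνμ hg = κ := by
    intro κ hνκ hκμ T' hg
    apply yd_ext
    show cutCells ν μ (glueFun ν μ κ T') = κ.cells
    ext x
    rw [mem_cutCells]
    constructor
    · rintro (hν | ⟨hS, h0⟩)
      · exact YoungDiagram.cells_subset_iff.mpr hνκ hν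
      · by_contra hcon
        have hm : x ∈ skewCells κ μ :=
          Finset.mem_sdiff.mpr ⟨(Finset.mem_sdiff.mp hS).1, hcon⟩
        rw [glueFun_not_mem (c := ⟨x, hS⟩) hm] at h0
        exact Fin.succ_ne_zero _ h0
    · intro hxκ
      by_cases hν : x ∈ ν.cells
      · exact Or.inl hν
      · right
        have hS : x ∈ skewCells ν μ :=
          Finset.mem_sdiff.mpr ⟨YoungDiagram.cells_subset_iff.mpr hκμ hxκ, hν⟩
        exact ⟨hS, glueFun_mem (c := ⟨x, hS⟩) hxκ⟩
  refine (Finset.sum_bij'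
    (fun p (hp : p ∈ Finset.sigma _ _) => glueFun ν μ p.1 p.2)
    (fun T hT => ⟨cutKappa hνμ (Finset.mem_filter.mp hT).2,
      cutFun hνμ (Finset.mem_filter.mp hT).2⟩)
    ?_ ?_ ?_ ?_ ?_).symm
  · -- glue lands in the RPP filter
    intro p hp
    rw [Finset.mem_sigma, Finset.mem_filter, Finset.mem_filter] at hp
    rw [Finset.mem_filter]
    exact ⟨Finset.mem_univ _, glue_RPP (mem_subDiagrams.mp hp.1.1) hp.2.2⟩
  · -- cut lands in the sigma set
    intro T hT
    have hTR := (Finset.mem_filter.mp hT).2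
    rw [Finset.mem_sigma, Finset.mem_filter]
    exact ⟨⟨mem_subDiagrams.mpr (cutKappa_le_mu hνμ hTR), nu_le_cutKappa hνμ hTR⟩,
      Finset.mem_filter.mpr ⟨Finset.mem_univ _, cut_RPP hνμ hTR⟩⟩
  · -- cut ∘ glue = id
    rintro ⟨κ, T'⟩ hp
    rw [Finset.mem_sigma, Finset.mem_filter, Finset.mem_filter] at hp
    have hνκ : ν ≤ κ := hp.1.2
    have hκμ : κ ≤ μ := mem_subDiagrams.mp hp.1.1
    have hg : RPP (glueFun ν μ κ T') := glue_RPP hκμ hp.2.2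
    refine sigma_eq_of (hcut_glue κ hνκ hκμ T' _) ?_
    intro x hx1 hx2
    have hS : x ∈ skewCells ν μ := mem_skew_mono hνκ hκμ hx2
    have hval : glueFun ν μ κ T' ⟨x, hS⟩ = (T' ⟨x, hx2⟩).succ := glueFun_not_mem hx2
    have hne : glueFun ν μ κ T' ⟨x, hS⟩ ≠ 0 := by
      rw [hval]; exact Fin.succ_ne_zero _
    rw [cutFun_eq hνμ _ ⟨x, hx1⟩ hS hne]
    refine Fin.succ_injective _ ?_
    rw [Fin.succ_pred]
    exact hval
  · -- glue ∘ cut = id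
    intro T hT
    exact hglue_eq T (Finset.mem_filter.mp hT).2
  · -- weights agree
    rintro ⟨κ, T'⟩ hp
    rw [Finset.mem_sigma, Finset.mem_filter, Finset.mem_filter] at hp
    have hνκ : ν ≤ κ := hp.1.2
    have hκμ : κ ≤ μ := mem_subDiagrams.mp hp.1.1
    rw [ccnt_glue_zero hνκ hκμ T']
    congr 1
    exact Finset.prod_congr rfl fun i _ => by rw [ccnt_glue_succ hνκ hκμ T' i]

end Branch
/-! ### Stage 7a: assembly helpers -/

lemma double_to_prod {α β M : Type*} [AddCommMonoid M] (s : Finset α) (t : Finset β)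
    (p : α → Prop) (q : α → β → Prop) [DecidablePred p] [∀ a, DecidablePred (q a)]
    [∀ a b, Decidable (p a ∧ q a b)] (F : α → β → M) :
    ∑ a ∈ s.filter p, ∑ b ∈ t.filter (q a), F a b
      = ∑ a ∈ s, ∑ b ∈ t, if p a ∧ q a b then F a b else 0 := by
  rw [Finset.sum_filter]
  refine Finset.sum_congr rfl fun a _ => ?_
  by_cases hp : p a
  · rw [if_pos hp, Finset.sum_filter]
    refine Finset.sum_congr rfl fun b _ => ?_
    by_cases hq : q a b
    · rw [if_pos hq, if_pos ⟨hp, hq⟩]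
    · rw [if_neg hq, if_neg (fun hcon : _ ∧ _ => hq hcon.2)]
  · rw [if_neg hp, eq_comm]
    exact Finset.sum_eq_zero fun b _ => if_neg (fun hcon : _ ∧ _ => hp hcon.1)

lemma ite_and_comm {M : Type*} [Zero M] (P Q : Prop) (x : M) :
    (if P ∧ Q then x else 0) = if Q ∧ P then x else 0 :=
  if_congr and_comm rfl rfl

lemma not_mem_self_box (μ : YoungDiagram) (j : ℕ) : (μ.colLen j, j) ∉ μ.cells := by
  rw [YoungDiagram.mem_cells, YoungDiagram.mem_iff_lt_colLen]
  omega

lemma delBox_addable {κ : YoungDiagram} {j : ℕ} (hcc : cornerCol κ j) :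
    addableCol (delBox κ j) j := by
  have hpos : 0 < κ.colLen j := by unfold cornerCol at hcc; omega
  rcases Nat.eq_zero_or_pos j with hj | hj
  · exact Or.inl hj
  · right
    rw [colLen_delBox hcc j, colLen_delBox hcc (j - 1), if_pos rfl, if_neg (by omega)]
    have := κ.colLen_anti (j - 1) j (by omega)
    omega

lemma addBox_delBox {κ : YoungDiagram} {j : ℕ} (hcc : cornerCol κ j) :
    addBox (delBox κ j) j = κ := by
  have hpos : 0 < κ.colLen j := by unfold cornerCol at hcc; omega
  apply yd_ext
  rw [addBox_cells (delBox_addable hcc), delBox_cells hcc, colLen_delBox hcc j, if_pos rfl]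
  exact Finset.insert_erase (by
    rw [YoungDiagram.mem_cells]
    exact corner_box_mem hcc)

lemma cornerCol_addBox {σ : YoungDiagram} {j : ℕ} (ha : addableCol σ j) :
    cornerCol (addBox σ j) j := by
  unfold cornerCol
  rw [colLen_addBox ha j, colLen_addBox ha (j + 1), if_pos rfl, if_neg (by omega)]
  have := σ.colLen_anti j (j + 1) (by omega)
  omega

lemma delBox_addBox {σ : YoungDiagram} {j : ℕ} (ha : addableCol σ j) :
    delBox (addBox σ j) j = σ := by
  apply yd_ext
  rw [delBox_cells (cornerCol_addBox ha), addBox_cells ha, colLen_addBox ha j, if_pos rfl,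
    Nat.add_sub_cancel]
  exact Finset.erase_insert (not_mem_self_box σ j)

lemma addable_mu_of {μ σ : YoungDiagram} {j : ℕ} (hσ : σ ≤ μ) (ha : addableCol σ j)
    (he : σ.colLen j = μ.colLen j) : addableCol μ j := by
  rcases ha with h | h
  · exact Or.inl h
  · right
    have := colLen_le_of_le hσ (j - 1)
    omega

lemma filter_not_mem_addBox {ν μ : YoungDiagram} {j : ℕ} (hνμ : ν ≤ μ)
    (ha : addableCol μ j) :
    ((subDiagrams (addBox μ j)).filter (fun κ => ν ≤ κ)).filter
        (fun κ => (μ.colLen j, j) ∉ κ.cells)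
      = (subDiagrams μ).filter (fun κ => ν ≤ κ) := by
  ext κ
  simp only [Finset.mem_filter, mem_subDiagrams]
  constructor
  · rintro ⟨⟨h1, h2⟩, h3⟩
    refine ⟨?_, h2⟩
    rw [← YoungDiagram.cells_subset_iff] at h1 ⊢
    intro x hx
    have hx2 := h1 hx
    rw [addBox_cells ha, Finset.mem_insert] at hx2
    rcases hx2 with rfl | h
    · exact absurd hx h3
    · exact h
  · rintro ⟨h1, h2⟩
    refine ⟨⟨h1.trans (le_addBox μ j), h2⟩, fun hcon => ?_⟩
    exact not_mem_self_box μ j (YoungDiagram.cells_subset_iff.mpr h1 hcon)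

lemma skewCells_addBox_mem {μ σ : YoungDiagram} {j : ℕ} (hσμ : σ ≤ μ)
    (ha : addableCol σ j) (he : σ.colLen j = μ.colLen j) :
    skewCells (addBox σ j) (addBox μ j) = skewCells σ μ := by
  have haμ : addableCol μ j := addable_mu_of hσμ ha he
  unfold skewCells
  rw [addBox_cells ha, addBox_cells haμ, he]
  ext x
  simp only [Finset.mem_sdiff, Finset.mem_insert]
  constructor
  · rintro ⟨hx1, hx2⟩
    push_neg at hx2
    rcases hx1 with rfl | hx1
    · exact absurd rfl hx2.1
    · exact ⟨hx1, hx2.2⟩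
  · rintro ⟨hx1, hx2⟩
    have hxb : x ≠ (μ.colLen j, j) := by
      rintro rfl
      exact not_mem_self_box μ j hx1
    exact ⟨Or.inr hx1, by push_neg; exact ⟨hxb, hx2⟩⟩

lemma skewCells_delBox_right {μ κ : YoungDiagram} {j : ℕ} (hcc : cornerCol κ j)
    (hbμ : (κ.colLen j - 1, j) ∉ μ.cells) :
    skewCells (delBox κ j) μ = skewCells κ μ := by
  unfold skewCells
  rw [delBox_cells hcc]
  ext x
  simp only [Finset.mem_sdiff, Finset.mem_erase]
  constructor
  · rintro ⟨hx1, hx2⟩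
    push_neg at hx2
    refine ⟨hx1, ?_⟩
    intro hcon
    have hxb : x ≠ (κ.colLen j - 1, j) := by
      rintro rfl
      exact hbμ hx1
    exact absurd hcon (hx2 hxb)
  · rintro ⟨hx1, hx2⟩
    exact ⟨hx1, by push_neg; intro _; exact hx2⟩

/-- the per-`j` reindexing of the `b ∈ κ` part of the upper Pieri sum -/
lemma reindex_addline (m : ℕ) (ν μ : YoungDiagram) (hνμ : ν ≤ μ) {j : ℕ}
    (ha : addableCol μ j) :
    ∑ κ ∈ ((subDiagrams (addBox μ j)).filter (fun κ => ν ≤ κ)).filter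
        (fun κ => (μ.colLen j, j) ∈ κ.cells),
      (MvPolynomial.X 0 : MvPolynomial (Fin (m + 1)) ℤ) ^ skewCols ν κ
        * MvPolynomial.rename Fin.succ (gC m (skewCells κ (addBox μ j)))
      = ∑ σ ∈ (subDiagrams μ).filter
          (fun σ => addableCol σ j ∧ σ.colLen j = μ.colLen j ∧ ν ≤ addBox σ j),
        (MvPolynomial.X 0 : MvPolynomial (Fin (m + 1)) ℤ) ^ skewCols ν (addBox σ j)
          * MvPolynomial.rename Fin.succ (gC m (skewCells σ μ)) := by
  -- facts about a κ in the source
  have hfacts : ∀ κ : YoungDiagram, κ ≤ addBox μ j → (μ.colLen j, j) ∈ κ.cells →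
      cornerCol κ j ∧ κ.colLen j = μ.colLen j + 1 := by
    intro κ h1 h3
    have hup : κ.colLen j ≤ μ.colLen j + 1 := by
      have := colLen_le_of_le h1 j
      rw [colLen_addBox ha j, if_pos rfl] at this
      exact this
    have hdn : μ.colLen j < κ.colLen j := by
      rw [YoungDiagram.mem_cells, YoungDiagram.mem_iff_lt_colLen] at h3
      exact h3
    have hj1 : κ.colLen (j + 1) ≤ μ.colLen (j + 1) := by
      have := colLen_le_of_le h1 (j + 1)
      rw [colLen_addBox ha (j + 1), if_neg (by omega)] at this
      omega
    have := μ.colLen_anti j (j + 1) (by omega)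
    exact ⟨by unfold cornerCol; omega, by omega⟩
  refine Finset.sum_nbij' (fun κ => delBox κ j) (fun σ => addBox σ j) ?_ ?_ ?_ ?_ ?_
  · -- forward membership
    intro κ hκ
    simp only [Finset.mem_filter, mem_subDiagrams] at hκ ⊢
    obtain ⟨⟨h1, h2⟩, h3⟩ := hκ
    obtain ⟨hcc, hcl⟩ := hfacts κ h1 h3
    have hBD : addBox (delBox κ j) j = κ := addBox_delBox hcc
    have hδj : (delBox κ j).colLen j = μ.colLen j := by
      rw [colLen_delBox hcc j, if_pos rfl]; omega
    refine ⟨?_, delBox_addable hcc, hδj, by rwa [hBD]⟩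
    -- delBox κ j ≤ μ
    rw [← YoungDiagram.cells_subset_iff]
    intro x hx
    rw [delBox_cells hcc, Finset.mem_erase] at hx
    have := YoungDiagram.cells_subset_iff.mpr h1 hx.2
    rw [addBox_cells ha, Finset.mem_insert] at this
    rcases this with rfl | h
    · exact absurd (by rw [hcl]; simp) hx.1
    · exact h
  · -- backward membership
    intro σ hσ
    simp only [Finset.mem_filter, mem_subDiagrams] at hσ ⊢
    obtain ⟨h1, h2, h3, h4⟩ := hσ
    have hbb : ((σ.colLen j, j) : ℕ × ℕ) = (μ.colLen j, j) := by rw [h3]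
    refine ⟨⟨?_, h4⟩, ?_⟩
    · rw [← YoungDiagram.cells_subset_iff, addBox_cells h2, addBox_cells ha, hbb]
      exact Finset.insert_subset_insert _ (YoungDiagram.cells_subset_iff.mpr h1)
    · rw [addBox_cells h2, hbb]
      exact Finset.mem_insert_self _ _
  · -- left inverse
    intro κ hκ
    simp only [Finset.mem_filter, mem_subDiagrams] at hκ
    exact addBox_delBox (hfacts κ hκ.1.1 hκ.2).1
  · -- right inverse
    intro σ hσ
    simp only [Finset.mem_filter, mem_subDiagrams] at hσ
    exact delBox_addBox hσ.2.1
  · -- values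
    intro κ hκ
    simp only [Finset.mem_filter, mem_subDiagrams] at hκ
    obtain ⟨⟨h1, h2⟩, h3⟩ := hκ
    obtain ⟨hcc, hcl⟩ := hfacts κ h1 h3
    have hBD : addBox (delBox κ j) j = κ := addBox_delBox hcc
    have hcells : skewCells κ (addBox μ j) = skewCells (delBox κ j) μ := by
      conv_lhs => rw [← hBD]
      have hδμ : delBox κ j ≤ μ := by
        rw [← YoungDiagram.cells_subset_iff]
        intro x hx
        rw [delBox_cells hcc, Finset.mem_erase] at hx
        have := YoungDiagram.cells_subset_iff.mpr h1 hx.2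
        rw [addBox_cells ha, Finset.mem_insert] at this
        rcases this with rfl | h
        · exact absurd (by rw [hcl]; simp) hx.1
        · exact h
      have hδj : (delBox κ j).colLen j = μ.colLen j := by
        rw [colLen_delBox hcc j, if_pos rfl]; omega
      exact skewCells_addBox_mem hδμ (delBox_addable hcc) hδj
    rw [hcells, hBD]
/-! ### Stage 7b: the lower reindexing and the main induction -/

lemma reindex_delline (m : ℕ) (ν μ : YoungDiagram) (j : ℕ) :
    ∑ κ ∈ (subDiagrams μ).filter (fun κ => ν ≤ κ ∧ cornerCol κ j),
      (MvPolynomial.X 0 : MvPolynomial (Fin (m + 1)) ℤ) ^ skewCols ν κ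
        * MvPolynomial.rename Fin.succ (gC m (skewCells (delBox κ j) μ))
      = ∑ σ ∈ (subDiagrams μ).filter
          (fun σ => addableCol σ j ∧ (σ.colLen j, j) ∈ μ.cells ∧ ν ≤ addBox σ j),
        (MvPolynomial.X 0 : MvPolynomial (Fin (m + 1)) ℤ) ^ skewCols ν (addBox σ j)
          * MvPolynomial.rename Fin.succ (gC m (skewCells σ μ)) := by
  refine Finset.sum_nbij' (fun κ => delBox κ j) (fun σ => addBox σ j) ?_ ?_ ?_ ?_ ?_
  · intro κ hκ
    simp only [Finset.mem_filter, mem_subDiagrams] at hκ ⊢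
    obtain ⟨h1, h2, h3⟩ := hκ
    have hpos : 0 < κ.colLen j := by unfold cornerCol at h3; omega
    refine ⟨(delBox_le κ j).trans h1, delBox_addable h3, ?_, ?_⟩
    · rw [colLen_delBox h3 j, if_pos rfl]
      exact YoungDiagram.cells_subset_iff.mpr h1
        (by rw [YoungDiagram.mem_cells]; exact corner_box_mem h3)
    · rw [addBox_delBox h3]
      exact h2
  · intro σ hσ
    simp only [Finset.mem_filter, mem_subDiagrams] at hσ ⊢
    obtain ⟨h1, h2, h3, h4⟩ := hσ
    refine ⟨?_, h4.trans (le_of_eq rfl), cornerCol_addBox h2⟩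
    · rw [← YoungDiagram.cells_subset_iff, addBox_cells h2]
      exact Finset.insert_subset h3 (YoungDiagram.cells_subset_iff.mpr h1)
  · intro κ hκ
    simp only [Finset.mem_filter, mem_subDiagrams] at hκ
    exact addBox_delBox hκ.2.2
  · intro σ hσ
    simp only [Finset.mem_filter, mem_subDiagrams] at hσ
    exact delBox_addBox hσ.2.1
  · intro κ hκ
    simp only [Finset.mem_filter, mem_subDiagrams] at hκ
    rw [addBox_delBox hκ.2.2]

theorem AUX (m : ℕ) : ∀ ν μ : YoungDiagram, ν ≤ μ →
    gC m ({(0, 0)} : Finset (ℕ × ℕ)) * gC m (skewCells ν μ)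
      = ((numCorners ν : ℤ) - (numCorners μ : ℤ)) • gC m (skewCells ν μ)
        + ∑ j ∈ ACF μ (μ.rowLen 0 + 1), gC m (skewCells ν (addBox μ j))
        - ∑ j ∈ CCF ν (ν.rowLen 0 + 1), gC m (skewCells (delBox ν j) μ) := by
  induction m with
  | zero =>
    intro ν μ hνμ
    have h1 : gC 0 ({(0, 0)} : Finset (ℕ × ℕ)) = 0 :=
      gC_of_nonempty ⟨(0, 0), Finset.mem_singleton_self _⟩
    rw [h1, zero_mul]
    have h2 : ((numCorners ν : ℤ) - (numCorners μ : ℤ)) • gC 0 (skewCells ν μ) = 0 := by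
      by_cases he : ν = μ
      · subst he
        rw [sub_self, zero_smul]
      · rw [gC_of_nonempty (skewCells_nonempty hνμ he), smul_zero]
    have h3 : ∀ j ∈ ACF μ (μ.rowLen 0 + 1), gC 0 (skewCells ν (addBox μ j)) = 0 := by
      intro j hj
      rw [mem_ACF] at hj
      apply gC_of_nonempty
      refine ⟨(μ.colLen j, j), ?_⟩
      rw [mem_skewCells]
      constructor
      · rw [addBox_cells hj.2]
        exact Finset.mem_insert_self _ _
      · intro hcon
        exact not_mem_self_box μ j (YoungDiagram.cells_subset_iff.mpr hνμ hcon)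
    have h4 : ∀ j ∈ CCF ν (ν.rowLen 0 + 1), gC 0 (skewCells (delBox ν j) μ) = 0 := by
      intro j hj
      rw [mem_CCF] at hj
      apply gC_of_nonempty
      refine ⟨(ν.colLen j - 1, j), ?_⟩
      rw [mem_skewCells]
      constructor
      · exact YoungDiagram.cells_subset_iff.mpr hνμ
          (by rw [YoungDiagram.mem_cells]; exact corner_box_mem hj.2)
      · rw [delBox_cells hj.2]
        exact Finset.notMem_erase _ _
    rw [h2, Finset.sum_eq_zero h3, Finset.sum_eq_zero h4]
    ring
  | succ m IH =>
    intro ν μ hνμ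
    have hone : gC (m + 1) ({(0, 0)} : Finset (ℕ × ℕ))
        = MvPolynomial.X 0
          + MvPolynomial.rename Fin.succ (gC m ({(0, 0)} : Finset (ℕ × ℕ))) := by
      rw [gC_single, gC_single, map_sum, Fin.sum_univ_succ]
      congr 1
      exact Finset.sum_congr rfl fun i _ => (MvPolynomial.rename_X _ _).symm
    have hCCFν : CCF ν (ν.rowLen 0 + 1) = CCF ν (μ.rowLen 0 + 1) :=
      CCF_eq (by omega) (by have := rowLen_le_of_le hνμ 0; omega)
    rw [hCCFν]
    -- notation-free normal forms
    have hL : gC (m + 1) ({(0, 0)} : Finset (ℕ × ℕ)) * gC (m + 1) (skewCells ν μ)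
        = (∑ σ ∈ subDiagrams μ, if ν ≤ σ then
              (MvPolynomial.X 0 : MvPolynomial (Fin (m + 1)) ℤ) ^ (skewCols ν σ + 1)
                * MvPolynomial.rename Fin.succ (gC m (skewCells σ μ)) else 0)
          + ((∑ σ ∈ subDiagrams μ, if ν ≤ σ then
              ((numCorners σ : ℤ) - (numCorners μ : ℤ))
                • ((MvPolynomial.X 0 : MvPolynomial (Fin (m + 1)) ℤ) ^ skewCols ν σ
                  * MvPolynomial.rename Fin.succ (gC m (skewCells σ μ))) else 0)
            + (∑ κ ∈ (subDiagrams μ).filter (fun κ => ν ≤ κ), ∑ j ∈ ACF μ (μ.rowLen 0 + 1),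
                (MvPolynomial.X 0 : MvPolynomial (Fin (m + 1)) ℤ) ^ skewCols ν κ
                  * MvPolynomial.rename Fin.succ (gC m (skewCells κ (addBox μ j))))
            - ∑ σ ∈ subDiagrams μ, ∑ j ∈ Finset.range (μ.rowLen 0 + 1),
                (if addableCol σ j ∧ (σ.colLen j, j) ∈ μ.cells ∧ ν ≤ addBox σ j then
                  (MvPolynomial.X 0 : MvPolynomial (Fin (m + 1)) ℤ) ^ skewCols ν (addBox σ j)
                    * MvPolynomial.rename Fin.succ (gC m (skewCells σ μ)) else 0)) := by
      rw [gC_branch m ν μ hνμ, hone, add_mul, Finset.mul_sum, Finset.mul_sum]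
      have h1 : ∑ κ ∈ (subDiagrams μ).filter (fun κ => ν ≤ κ),
          MvPolynomial.X 0 * ((MvPolynomial.X 0 : MvPolynomial (Fin (m + 1)) ℤ) ^ skewCols ν κ
            * MvPolynomial.rename Fin.succ (gC m (skewCells κ μ)))
          = ∑ σ ∈ subDiagrams μ, if ν ≤ σ then
              (MvPolynomial.X 0 : MvPolynomial (Fin (m + 1)) ℤ) ^ (skewCols ν σ + 1)
                * MvPolynomial.rename Fin.succ (gC m (skewCells σ μ)) else 0 := by
        rw [Finset.sum_filter]
        refine Finset.sum_congr rfl fun σ _ => ?_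
        by_cases h : ν ≤ σ
        · rw [if_pos h, if_pos h]
          ring
        · rw [if_neg h, if_neg h]
      have hIH : ∀ κ ∈ (subDiagrams μ).filter (fun κ => ν ≤ κ),
          MvPolynomial.rename Fin.succ (gC m ({(0, 0)} : Finset (ℕ × ℕ)))
            * ((MvPolynomial.X 0 : MvPolynomial (Fin (m + 1)) ℤ) ^ skewCols ν κ
              * MvPolynomial.rename Fin.succ (gC m (skewCells κ μ)))
          = ((numCorners κ : ℤ) - (numCorners μ : ℤ))
              • ((MvPolynomial.X 0 : MvPolynomial (Fin (m + 1)) ℤ) ^ skewCols ν κ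
                * MvPolynomial.rename Fin.succ (gC m (skewCells κ μ)))
            + (∑ j ∈ ACF μ (μ.rowLen 0 + 1),
                (MvPolynomial.X 0 : MvPolynomial (Fin (m + 1)) ℤ) ^ skewCols ν κ
                  * MvPolynomial.rename Fin.succ (gC m (skewCells κ (addBox μ j))))
            - ∑ j ∈ CCF κ (μ.rowLen 0 + 1),
                (MvPolynomial.X 0 : MvPolynomial (Fin (m + 1)) ℤ) ^ skewCols ν κ
                  * MvPolynomial.rename Fin.succ (gC m (skewCells (delBox κ j) μ)) := by
        intro κ hκ
        rw [Finset.mem_filter, mem_subDiagrams] at hκ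
        have hκμ : κ ≤ μ := hκ.1
        have e1 : MvPolynomial.rename Fin.succ (gC m ({(0, 0)} : Finset (ℕ × ℕ)))
            * ((MvPolynomial.X 0 : MvPolynomial (Fin (m + 1)) ℤ) ^ skewCols ν κ
              * MvPolynomial.rename Fin.succ (gC m (skewCells κ μ)))
            = (MvPolynomial.X 0 : MvPolynomial (Fin (m + 1)) ℤ) ^ skewCols ν κ
              * MvPolynomial.rename Fin.succ
                (gC m ({(0, 0)} : Finset (ℕ × ℕ)) * gC m (skewCells κ μ)) := by
          rw [map_mul]
          ring
        rw [e1, IH κ μ hκμ, map_sub, map_add, map_zsmul, map_sum, map_sum]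
        rw [show CCF κ (κ.rowLen 0 + 1) = CCF κ (μ.rowLen 0 + 1) from
          CCF_eq (by omega) (by have := rowLen_le_of_le hκμ 0; omega)]
        rw [mul_sub, mul_add, Finset.mul_sum, Finset.mul_sum, mul_smul_comm]
      rw [Finset.sum_congr rfl hIH, Finset.sum_sub_distrib, Finset.sum_add_distrib, h1]
      have h2 : ∑ κ ∈ (subDiagrams μ).filter (fun κ => ν ≤ κ),
          ((numCorners κ : ℤ) - (numCorners μ : ℤ))
            • ((MvPolynomial.X 0 : MvPolynomial (Fin (m + 1)) ℤ) ^ skewCols ν κ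
              * MvPolynomial.rename Fin.succ (gC m (skewCells κ μ)))
          = ∑ σ ∈ subDiagrams μ, if ν ≤ σ then
              ((numCorners σ : ℤ) - (numCorners μ : ℤ))
                • ((MvPolynomial.X 0 : MvPolynomial (Fin (m + 1)) ℤ) ^ skewCols ν σ
                  * MvPolynomial.rename Fin.succ (gC m (skewCells σ μ))) else 0 :=
        Finset.sum_filter _ _
      have h4 : ∑ κ ∈ (subDiagrams μ).filter (fun κ => ν ≤ κ), ∑ j ∈ CCF κ (μ.rowLen 0 + 1),
          (MvPolynomial.X 0 : MvPolynomial (Fin (m + 1)) ℤ) ^ skewCols ν κ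
            * MvPolynomial.rename Fin.succ (gC m (skewCells (delBox κ j) μ))
          = ∑ σ ∈ subDiagrams μ, ∑ j ∈ Finset.range (μ.rowLen 0 + 1),
              (if addableCol σ j ∧ (σ.colLen j, j) ∈ μ.cells ∧ ν ≤ addBox σ j then
                (MvPolynomial.X 0 : MvPolynomial (Fin (m + 1)) ℤ) ^ skewCols ν (addBox σ j)
                  * MvPolynomial.rename Fin.succ (gC m (skewCells σ μ)) else 0) := by
        simp only [CCF]
        rw [double_to_prod (subDiagrams μ) (Finset.range (μ.rowLen 0 + 1))
          (fun κ => ν ≤ κ) (fun κ j => cornerCol κ j)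
          (fun κ j => (MvPolynomial.X 0 : MvPolynomial (Fin (m + 1)) ℤ) ^ skewCols ν κ
            * MvPolynomial.rename Fin.succ (gC m (skewCells (delBox κ j) μ)))]
        rw [Finset.sum_comm]
        have hj : ∀ j ∈ Finset.range (μ.rowLen 0 + 1),
            (∑ κ ∈ subDiagrams μ, if ν ≤ κ ∧ cornerCol κ j then
              (MvPolynomial.X 0 : MvPolynomial (Fin (m + 1)) ℤ) ^ skewCols ν κ
                * MvPolynomial.rename Fin.succ (gC m (skewCells (delBox κ j) μ)) else 0)
            = ∑ σ ∈ subDiagrams μ,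
                (if addableCol σ j ∧ (σ.colLen j, j) ∈ μ.cells ∧ ν ≤ addBox σ j then
                  (MvPolynomial.X 0 : MvPolynomial (Fin (m + 1)) ℤ) ^ skewCols ν (addBox σ j)
                    * MvPolynomial.rename Fin.succ (gC m (skewCells σ μ)) else 0) := by
          intro j _
          rw [← Finset.sum_filter, ← Finset.sum_filter]
          exact reindex_delline m ν μ j
        rw [Finset.sum_congr rfl hj, Finset.sum_comm]
      rw [h2, h4]
    rw [hL]
    -- the right-hand side
    have hR : ((numCorners ν : ℤ) - (numCorners μ : ℤ)) • gC (m + 1) (skewCells ν μ)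
          + (∑ j ∈ ACF μ (μ.rowLen 0 + 1), gC (m + 1) (skewCells ν (addBox μ j)))
          - ∑ j ∈ CCF ν (μ.rowLen 0 + 1), gC (m + 1) (skewCells (delBox ν j) μ)
        = (∑ σ ∈ subDiagrams μ, if ν ≤ σ then
              ((numCorners ν : ℤ) - (numCorners μ : ℤ))
                • ((MvPolynomial.X 0 : MvPolynomial (Fin (m + 1)) ℤ) ^ skewCols ν σ
                  * MvPolynomial.rename Fin.succ (gC m (skewCells σ μ))) else 0)
          + ((∑ κ ∈ (subDiagrams μ).filter (fun κ => ν ≤ κ), ∑ j ∈ ACF μ (μ.rowLen 0 + 1),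
                (MvPolynomial.X 0 : MvPolynomial (Fin (m + 1)) ℤ) ^ skewCols ν κ
                  * MvPolynomial.rename Fin.succ (gC m (skewCells κ (addBox μ j))))
            + (∑ σ ∈ subDiagrams μ, ∑ j ∈ Finset.range (μ.rowLen 0 + 1),
                (if addableCol σ j ∧ σ.colLen j = μ.colLen j ∧ ν ≤ addBox σ j then
                  (MvPolynomial.X 0 : MvPolynomial (Fin (m + 1)) ℤ) ^ skewCols ν (addBox σ j)
                    * MvPolynomial.rename Fin.succ (gC m (skewCells σ μ)) else 0)))
          - ∑ σ ∈ subDiagrams μ, ∑ j ∈ Finset.range (μ.rowLen 0 + 1),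
              (if cornerCol ν j ∧ delBox ν j ≤ σ then
                (MvPolynomial.X 0 : MvPolynomial (Fin (m + 1)) ℤ) ^ skewCols (delBox ν j) σ
                  * MvPolynomial.rename Fin.succ (gC m (skewCells σ μ)) else 0) := by
      congr 1
      · congr 1
        · -- the smul term
          rw [gC_branch m ν μ hνμ, Finset.smul_sum, Finset.sum_filter]
        · -- the upper Pieri group
          rw [Finset.sum_congr rfl fun j (hj : j ∈ ACF μ (μ.rowLen 0 + 1)) =>
            gC_branch m ν (addBox μ j) (hνμ.trans (le_addBox μ j))]
          have hR2 : ∀ j ∈ ACF μ (μ.rowLen 0 + 1),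
              (∑ κ ∈ (subDiagrams (addBox μ j)).filter (fun κ => ν ≤ κ),
                (MvPolynomial.X 0 : MvPolynomial (Fin (m + 1)) ℤ) ^ skewCols ν κ
                  * MvPolynomial.rename Fin.succ (gC m (skewCells κ (addBox μ j))))
              = (∑ κ ∈ (subDiagrams μ).filter (fun κ => ν ≤ κ),
                  (MvPolynomial.X 0 : MvPolynomial (Fin (m + 1)) ℤ) ^ skewCols ν κ
                    * MvPolynomial.rename Fin.succ (gC m (skewCells κ (addBox μ j))))
                + ∑ σ ∈ (subDiagrams μ).filter
                    (fun σ => addableCol σ j ∧ σ.colLen j = μ.colLen j ∧ ν ≤ addBox σ j),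
                  (MvPolynomial.X 0 : MvPolynomial (Fin (m + 1)) ℤ) ^ skewCols ν (addBox σ j)
                    * MvPolynomial.rename Fin.succ (gC m (skewCells σ μ)) := by
            intro j hj
            rw [mem_ACF] at hj
            conv_lhs => rw [← Finset.sum_filter_add_sum_filter_not
              ((subDiagrams (addBox μ j)).filter (fun κ => ν ≤ κ))
              (fun κ => (μ.colLen j, j) ∈ κ.cells)]
            rw [reindex_addline m ν μ hνμ hj.2, filter_not_mem_addBox hνμ hj.2]
            exact add_comm _ _
          rw [Finset.sum_congr rfl hR2, Finset.sum_add_distrib]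
          congr 1
          · exact Finset.sum_comm
          · rw [show ACF μ (μ.rowLen 0 + 1)
              = (Finset.range (μ.rowLen 0 + 1)).filter (addableCol μ) from rfl]
            rw [double_to_prod (Finset.range (μ.rowLen 0 + 1)) (subDiagrams μ)
              (addableCol μ)
              (fun j σ => addableCol σ j ∧ σ.colLen j = μ.colLen j ∧ ν ≤ addBox σ j)
              (fun j σ => (MvPolynomial.X 0 : MvPolynomial (Fin (m + 1)) ℤ)
                ^ skewCols ν (addBox σ j)
                * MvPolynomial.rename Fin.succ (gC m (skewCells σ μ)))]
            rw [Finset.sum_comm]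
            refine Finset.sum_congr rfl fun σ hσ => Finset.sum_congr rfl fun j _ => ?_
            have hσμ := mem_subDiagrams.mp hσ
            by_cases hQ : addableCol σ j ∧ σ.colLen j = μ.colLen j ∧ ν ≤ addBox σ j
            · rw [if_pos hQ, if_pos ⟨addable_mu_of hσμ hQ.1 hQ.2.1, hQ⟩]
            · rw [if_neg hQ, if_neg (fun hc : _ ∧ _ => hQ hc.2)]
      · -- the lower Pieri group
        rw [Finset.sum_congr rfl fun j (hj : j ∈ CCF ν (μ.rowLen 0 + 1)) =>
          gC_branch m (delBox ν j) μ ((delBox_le ν j).trans hνμ)]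
        rw [show CCF ν (μ.rowLen 0 + 1)
          = (Finset.range (μ.rowLen 0 + 1)).filter (cornerCol ν) from rfl]
        rw [double_to_prod (Finset.range (μ.rowLen 0 + 1)) (subDiagrams μ)
          (cornerCol ν) (fun j σ => delBox ν j ≤ σ)
          (fun j σ => (MvPolynomial.X 0 : MvPolynomial (Fin (m + 1)) ℤ)
            ^ skewCols (delBox ν j) σ
            * MvPolynomial.rename Fin.succ (gC m (skewCells σ μ)))]
        exact Finset.sum_comm
    rw [hR]
    -- the key pointwise identity
    have key : (∑ σ ∈ subDiagrams μ, if ν ≤ σ then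
            (MvPolynomial.X 0 : MvPolynomial (Fin (m + 1)) ℤ) ^ (skewCols ν σ + 1)
              * MvPolynomial.rename Fin.succ (gC m (skewCells σ μ)) else 0)
          + (∑ σ ∈ subDiagrams μ, if ν ≤ σ then
              ((numCorners σ : ℤ) - (numCorners μ : ℤ))
                • ((MvPolynomial.X 0 : MvPolynomial (Fin (m + 1)) ℤ) ^ skewCols ν σ
                  * MvPolynomial.rename Fin.succ (gC m (skewCells σ μ))) else 0)
          - ∑ σ ∈ subDiagrams μ, ∑ j ∈ Finset.range (μ.rowLen 0 + 1),
              (if addableCol σ j ∧ (σ.colLen j, j) ∈ μ.cells ∧ ν ≤ addBox σ j then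
                (MvPolynomial.X 0 : MvPolynomial (Fin (m + 1)) ℤ) ^ skewCols ν (addBox σ j)
                  * MvPolynomial.rename Fin.succ (gC m (skewCells σ μ)) else 0)
        = (∑ σ ∈ subDiagrams μ, if ν ≤ σ then
              ((numCorners ν : ℤ) - (numCorners μ : ℤ))
                • ((MvPolynomial.X 0 : MvPolynomial (Fin (m + 1)) ℤ) ^ skewCols ν σ
                  * MvPolynomial.rename Fin.succ (gC m (skewCells σ μ))) else 0)
          + (∑ σ ∈ subDiagrams μ, ∑ j ∈ Finset.range (μ.rowLen 0 + 1),
              (if addableCol σ j ∧ σ.colLen j = μ.colLen j ∧ ν ≤ addBox σ j then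
                (MvPolynomial.X 0 : MvPolynomial (Fin (m + 1)) ℤ) ^ skewCols ν (addBox σ j)
                  * MvPolynomial.rename Fin.succ (gC m (skewCells σ μ)) else 0))
          - ∑ σ ∈ subDiagrams μ, ∑ j ∈ Finset.range (μ.rowLen 0 + 1),
              (if cornerCol ν j ∧ delBox ν j ≤ σ then
                (MvPolynomial.X 0 : MvPolynomial (Fin (m + 1)) ℤ) ^ skewCols (delBox ν j) σ
                  * MvPolynomial.rename Fin.succ (gC m (skewCells σ μ)) else 0) := by
      rw [← Finset.sum_add_distrib, ← Finset.sum_sub_distrib,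
        ← Finset.sum_add_distrib, ← Finset.sum_sub_distrib]
      refine Finset.sum_congr rfl fun σ hσ => ?_
      have hσμ : σ ≤ μ := mem_subDiagrams.mp hσ
      have hA : (∑ j ∈ Finset.range (μ.rowLen 0 + 1),
            if addableCol σ j ∧ (σ.colLen j, j) ∈ μ.cells ∧ ν ≤ addBox σ j then
              (MvPolynomial.X 0 : MvPolynomial (Fin (m + 1)) ℤ) ^ skewCols ν (addBox σ j)
                * MvPolynomial.rename Fin.succ (gC m (skewCells σ μ)) else 0)
          = (∑ j ∈ Finset.range (μ.rowLen 0 + 1),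
              if addableCol σ j ∧ (σ.colLen j, j) ∈ μ.cells ∧ ν ≤ addBox σ j then
                (MvPolynomial.X 0 : MvPolynomial (Fin (m + 1)) ℤ) ^ skewCols ν (addBox σ j)
              else 0) * MvPolynomial.rename Fin.succ (gC m (skewCells σ μ)) := by
        rw [Finset.sum_mul]
        exact Finset.sum_congr rfl fun j _ => by rw [ite_mul, zero_mul]
      have hB : (∑ j ∈ Finset.range (μ.rowLen 0 + 1),
            if addableCol σ j ∧ σ.colLen j = μ.colLen j ∧ ν ≤ addBox σ j then
              (MvPolynomial.X 0 : MvPolynomial (Fin (m + 1)) ℤ) ^ skewCols ν (addBox σ j)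
                * MvPolynomial.rename Fin.succ (gC m (skewCells σ μ)) else 0)
          = (∑ j ∈ Finset.range (μ.rowLen 0 + 1),
              if addableCol σ j ∧ σ.colLen j = μ.colLen j ∧ ν ≤ addBox σ j then
                (MvPolynomial.X 0 : MvPolynomial (Fin (m + 1)) ℤ) ^ skewCols ν (addBox σ j)
              else 0) * MvPolynomial.rename Fin.succ (gC m (skewCells σ μ)) := by
        rw [Finset.sum_mul]
        exact Finset.sum_congr rfl fun j _ => by rw [ite_mul, zero_mul]
      have hC : (∑ j ∈ Finset.range (μ.rowLen 0 + 1),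
            if cornerCol ν j ∧ delBox ν j ≤ σ then
              (MvPolynomial.X 0 : MvPolynomial (Fin (m + 1)) ℤ) ^ skewCols (delBox ν j) σ
                * MvPolynomial.rename Fin.succ (gC m (skewCells σ μ)) else 0)
          = (∑ j ∈ Finset.range (μ.rowLen 0 + 1),
              if cornerCol ν j ∧ delBox ν j ≤ σ then
                (MvPolynomial.X 0 : MvPolynomial (Fin (m + 1)) ℤ) ^ skewCols (delBox ν j) σ
              else 0) * MvPolynomial.rename Fin.succ (gC m (skewCells σ μ)) := by
        rw [Finset.sum_mul]
        exact Finset.sum_congr rfl fun j _ => by rw [ite_mul, zero_mul]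
      rw [hA, hB, hC]
      have hco := coeff_id (MvPolynomial.X 0 : MvPolynomial (Fin (m + 1)) ℤ) ν μ σ hσμ
        (μ.rowLen 0) (le_refl _)
      have hmerge : (∑ j ∈ Finset.range (μ.rowLen 0 + 1),
            if addableCol σ j ∧ (σ.colLen j, j) ∈ μ.cells ∧ ν ≤ addBox σ j then
              (MvPolynomial.X 0 : MvPolynomial (Fin (m + 1)) ℤ) ^ skewCols ν (addBox σ j)
            else 0)
          + (∑ j ∈ Finset.range (μ.rowLen 0 + 1),
            if addableCol σ j ∧ σ.colLen j = μ.colLen j ∧ ν ≤ addBox σ j then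
              (MvPolynomial.X 0 : MvPolynomial (Fin (m + 1)) ℤ) ^ skewCols ν (addBox σ j)
            else 0)
          = ∑ j ∈ Finset.range (μ.rowLen 0 + 1),
              if addableCol σ j ∧ ν ≤ addBox σ j then
                (MvPolynomial.X 0 : MvPolynomial (Fin (m + 1)) ℤ) ^ skewCols ν (addBox σ j)
              else 0 := by
        rw [← Finset.sum_add_distrib]
        refine Finset.sum_congr rfl fun j _ => ?_
        have hle := colLen_le_of_le hσμ j
        by_cases h1 : addableCol σ j ∧ ν ≤ addBox σ j
        · by_cases h2 : (σ.colLen j, j) ∈ μ.cells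
          · have h2' : ¬ σ.colLen j = μ.colLen j := by
              rw [YoungDiagram.mem_cells, YoungDiagram.mem_iff_lt_colLen] at h2
              omega
            rw [if_pos ⟨h1.1, h2, h1.2⟩, if_neg (fun hc : _ ∧ _ ∧ _ => h2' hc.2.1),
              if_pos h1, add_zero]
          · have h2' : σ.colLen j = μ.colLen j := by
              rw [YoungDiagram.mem_cells, YoungDiagram.mem_iff_lt_colLen] at h2
              omega
            rw [if_neg (fun hc : _ ∧ _ ∧ _ => h2 hc.2.1), if_pos ⟨h1.1, h2', h1.2⟩,
              if_pos h1, zero_add]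
        · rw [if_neg (fun hc : _ ∧ _ ∧ _ => h1 ⟨hc.1, hc.2.2⟩),
            if_neg (fun hc : _ ∧ _ ∧ _ => h1 ⟨hc.1, hc.2.2⟩), if_neg h1, add_zero]
      by_cases hν : ν ≤ σ
      · rw [if_pos hν] at hco
        rw [if_pos hν, if_pos hν, if_pos hν]
        simp only [zsmul_eq_mul] at hco ⊢
        push_cast at hco ⊢
        linear_combination MvPolynomial.rename Fin.succ (gC m (skewCells σ μ)) * hco
          - MvPolynomial.rename Fin.succ (gC m (skewCells σ μ)) * hmerge
      · rw [if_neg hν] at hco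
        rw [if_neg hν, if_neg hν, if_neg hν]
        try simp only [zsmul_eq_mul] at hco ⊢
        try push_cast at hco ⊢
        linear_combination MvPolynomial.rename Fin.succ (gC m (skewCells σ μ)) * hco
          - MvPolynomial.rename Fin.succ (gC m (skewCells σ μ)) * hmerge
    linear_combination key

/-! ### Stage 8: final conversions -/

lemma skewCells_one : skewCells ⊥ (rowPartition 1) = ({(0, 0)} : Finset (ℕ × ℕ)) := by
  unfold skewCells
  rw [YoungDiagram.cells_bot, Finset.sdiff_empty]
  ext x
  simp only [rowPartition, Finset.mem_product, Finset.mem_range, Finset.mem_singleton]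
  constructor
  · rintro ⟨h1, h2⟩
    exact Prod.ext (by omega) (by omega)
  · rintro rfl
    exact ⟨by omega, by omega⟩

lemma upSet_sum {M : Type*} [AddCommMonoid M] (μ : YoungDiagram) (f : YoungDiagram → M) :
    ∑ lam ∈ upSet μ, f lam = ∑ j ∈ ACF μ (μ.rowLen 0 + 1), f (addBox μ j) := by
  unfold upSet
  have hFA : (Finset.range (μ.rowLen 0 + 1)).filter
      (fun j => ∃ lam : YoungDiagram, lam.cells = insert (μ.colLen j, j) μ.cells)
      = ACF μ (μ.rowLen 0 + 1) := by
    apply Finset.filter_congr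
    intro j _
    constructor
    · rintro ⟨lam, hlam⟩
      rcases Nat.eq_zero_or_pos j with hj | hj
      · exact Or.inl hj
      · right
        have hmem : (μ.colLen j, j) ∈ lam.cells := by
          rw [hlam]; exact Finset.mem_insert_self _ _
        have hmem2 : (μ.colLen j, j - 1) ∈ lam.cells := by
          rw [YoungDiagram.mem_cells] at hmem ⊢
          exact mem_of_le_of_mem (show ((μ.colLen j, j - 1) : ℕ × ℕ) ≤ (μ.colLen j, j) from
            Prod.le_def.mpr ⟨le_refl _, by omega⟩) hmem
        rw [hlam, Finset.mem_insert] at hmem2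
        rcases hmem2 with hcon | hmem2
        · have := congrArg Prod.snd hcon
          simp only at this
          omega
        · rw [YoungDiagram.mem_cells, YoungDiagram.mem_iff_lt_colLen] at hmem2
          omega
    · intro h
      exact ⟨addBox μ j, addBox_cells h⟩
  have haddc : ∀ j ∈ ACF μ (μ.rowLen 0 + 1), addColDia μ j = addBox μ j := by
    intro j hj
    rw [mem_ACF] at hj
    have hex : ∃ lam : YoungDiagram, lam.cells = insert (μ.colLen j, j) μ.cells :=
      ⟨addBox μ j, addBox_cells hj.2⟩
    apply yd_ext
    rw [addColDia, dif_pos hex, hex.choose_spec, addBox_cells hj.2]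
  rw [hFA]
  rw [Finset.sum_image (by
    intro j1 h1 j2 h2 heq
    rw [haddc j1 h1, haddc j2 h2] at heq
    rw [Finset.mem_coe, mem_ACF] at h1 h2
    have hc := congrArg YoungDiagram.cells heq
    rw [addBox_cells h1.2, addBox_cells h2.2] at hc
    have : (μ.colLen j1, j1) ∈ insert (μ.colLen j2, j2) μ.cells := by
      rw [← hc]; exact Finset.mem_insert_self _ _
    rw [Finset.mem_insert] at this
    rcases this with h | h
    · exact congrArg Prod.snd h
    · exact absurd h (not_mem_self_box μ j1))]
  exact Finset.sum_congr rfl fun j hj => by rw [haddc j hj]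

lemma downSet_eq (ν : YoungDiagram) :
    downSet ν = (CCF ν (ν.rowLen 0 + 1)).image (delBox ν) := by
  ext η
  unfold downSet
  rw [Finset.mem_filter, mem_subDiagrams, Finset.mem_image]
  constructor
  · rintro ⟨hle, hsz⟩
    unfold skewSize skewCells at hsz
    obtain ⟨b, hb⟩ := Finset.card_eq_one.mp hsz
    have hbν : b ∈ ν.cells := by
      have : b ∈ ν.cells \ η.cells := by rw [hb]; exact Finset.mem_singleton_self _
      exact (Finset.mem_sdiff.mp this).1
    have hbη : b ∉ η.cells := by
      have : b ∈ ν.cells \ η.cells := by rw [hb]; exact Finset.mem_singleton_self _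
      exact (Finset.mem_sdiff.mp this).2
    have hcells : η.cells = ν.cells.erase b := by
      ext x
      rw [Finset.mem_erase]
      constructor
      · intro hx
        refine ⟨fun hcon => hbη (hcon ▸ hx), YoungDiagram.cells_subset_iff.mpr hle hx⟩
      · rintro ⟨hne, hx⟩
        by_contra hcon
        have : x ∈ ν.cells \ η.cells := Finset.mem_sdiff.mpr ⟨hx, hcon⟩
        rw [hb, Finset.mem_singleton] at this
        exact hne this
    have hηmem : ∀ x, x ∈ ν.cells → x ≠ b → x ∈ η.cells := by
      intro x hx hne
      rw [hcells, Finset.mem_erase]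
      exact ⟨hne, hx⟩
    have hcl : ν.colLen b.2 = b.1 + 1 := by
      have h1 : b.1 < ν.colLen b.2 :=
        YoungDiagram.mem_iff_lt_colLen.mp ((YoungDiagram.mem_cells _).mp (by simpa using hbν))
      have h2 : ¬ (b.1 + 1, b.2) ∈ ν := by
        intro hcon
        have hne : ((b.1 + 1, b.2) : ℕ × ℕ) ≠ b := by
          intro hc
          have := congrArg Prod.fst hc
          simp only at this
          omega
        have hmem := hηmem _ ((YoungDiagram.mem_cells _).mpr hcon) hne
        have : b ∈ η.cells := by
          rw [YoungDiagram.mem_cells] at hmem ⊢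
          exact mem_of_le_of_mem (show b ≤ ((b.1 + 1, b.2) : ℕ × ℕ) from
            Prod.le_def.mpr ⟨by omega, le_refl _⟩) (by simpa using hmem)
        exact hbη this
      rw [YoungDiagram.mem_iff_lt_colLen] at h2
      omega
    have hcc : cornerCol ν b.2 := by
      unfold cornerCol
      have h2 : ¬ (b.1, b.2 + 1) ∈ ν := by
        intro hcon
        have hne : ((b.1, b.2 + 1) : ℕ × ℕ) ≠ b := by
          intro hc
          have := congrArg Prod.snd hc
          simp only at this
          omega
        have hmem := hηmem _ ((YoungDiagram.mem_cells _).mpr hcon) hne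
        have : b ∈ η.cells := by
          rw [YoungDiagram.mem_cells] at hmem ⊢
          exact mem_of_le_of_mem (show b ≤ ((b.1, b.2 + 1) : ℕ × ℕ) from
            Prod.le_def.mpr ⟨le_refl _, by omega⟩) (by simpa using hmem)
        exact hbη this
      rw [YoungDiagram.mem_iff_lt_colLen] at h2
      omega
    refine ⟨b.2, ?_, ?_⟩
    · rw [mem_CCF]
      refine ⟨?_, hcc⟩
      have : 0 < ν.colLen b.2 := by omega
      have := lt_rowLen_of_colLen_pos this
      omega
    · apply yd_ext
      rw [delBox_cells hcc, hcells]
      congr 1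
      rw [hcl]
      exact Prod.ext (by omega) rfl
  · rintro ⟨j, hj, rfl⟩
    rw [mem_CCF] at hj
    refine ⟨delBox_le ν j, ?_⟩
    unfold skewSize skewCells
    rw [delBox_cells hj.2]
    have hbm : (ν.colLen j - 1, j) ∈ ν.cells := by
      rw [YoungDiagram.mem_cells]
      exact corner_box_mem hj.2
    have : ν.cells \ ν.cells.erase (ν.colLen j - 1, j) = {(ν.colLen j - 1, j)} := by
      ext x
      rw [Finset.mem_sdiff, Finset.mem_erase, Finset.mem_singleton]
      constructor
      · rintro ⟨hx, hx2⟩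
        by_contra hne
        exact hx2 ⟨hne, hx⟩
      · rintro rfl
        exact ⟨hbm, fun hc => hc.1 rfl⟩
    rw [this, Finset.card_singleton]

lemma downSet_sum {M : Type*} [AddCommMonoid M] (ν : YoungDiagram) (f : YoungDiagram → M) :
    ∑ η ∈ downSet ν, f η = ∑ j ∈ CCF ν (ν.rowLen 0 + 1), f (delBox ν j) := by
  rw [downSet_eq]
  apply Finset.sum_image
  intro j1 h1 j2 h2 heq
  rw [Finset.mem_coe, mem_CCF] at h1 h2
  by_contra hne
  have hb1 : (ν.colLen j1 - 1, j1) ∈ (delBox ν j1).cells := by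
    rw [heq, delBox_cells h2.2, Finset.mem_erase]
    constructor
    · intro hc
      exact hne (congrArg Prod.snd hc)
    · rw [YoungDiagram.mem_cells]
      exact corner_box_mem h1.2
  rw [delBox_cells h1.2] at hb1
  exact absurd hb1 (Finset.notMem_erase _ _)
end SkPieri
/-- Simple skew Pieri rule at `β = 1` (Corollary of Section 7 of the paper), in
`ℤ[y_1,…,y_m]`:
`g_{(1)} g_{μ/ν} = (i(ν) - i(μ)) g_{μ/ν} + Σ_{λ = μ+□} g_{λ/ν} - Σ_{η = ν-□} g_{μ/η}`. -/
theorem simple_skew_pieri_g (m : ℕ) (hm : 1 ≤ m) (μ ν : YoungDiagram) (hνμ : ν ≤ μ) :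
    grpp ℤ 1 m ⊥ (rowPartition 1) * grpp ℤ 1 m ν μ
      = ((numCorners ν : ℤ) - (numCorners μ : ℤ)) • grpp ℤ 1 m ν μ
        + ∑ lam ∈ upSet μ, grpp ℤ 1 m ν lam
        - ∑ η ∈ downSet ν, grpp ℤ 1 m η μ := by
  have h3 : ∑ lam ∈ upSet μ, grpp ℤ 1 m ν lam
      = ∑ j ∈ SkPieri.ACF μ (μ.rowLen 0 + 1),
          SkPieri.gC m (skewCells ν (SkPieri.addBox μ j)) := by
    rw [SkPieri.upSet_sum μ (fun lam => grpp ℤ 1 m ν lam)]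
    exact Finset.sum_congr rfl fun j _ => SkPieri.grpp_eq m ν _
  have h4 : ∑ η ∈ downSet ν, grpp ℤ 1 m η μ
      = ∑ j ∈ SkPieri.CCF ν (ν.rowLen 0 + 1),
          SkPieri.gC m (skewCells (SkPieri.delBox ν j) μ) := by
    rw [SkPieri.downSet_sum ν (fun η => grpp ℤ 1 m η μ)]
    exact Finset.sum_congr rfl fun j _ => SkPieri.grpp_eq m _ μ
  rw [h3, h4, SkPieri.grpp_eq m ν μ, SkPieri.grpp_eq m ⊥ (rowPartition 1),
    SkPieri.skewCells_one]
  exact SkPieri.AUX m ν μ hνμ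
end
end

section
/- The Cauchy filtration of Young's lattice is a dual filtered graph: let Ũ := Σ_{i ≥ 1} ũ_i, and for a scalar κ ∈ R let D̄ be the operator defined on basis elements by D̄·λ := Σ_{μ ⊆ λ, μ ≠ λ} κ^{c(λ/μ)} β^{|λ/μ| − c(λ/μ)} · μ. Then D̄Ũ − ŨD̄ = κ(1 + D̄) as operators on P. -/
open scoped Classical

noncomputable section

/-- The Schur "up" operator `u_{j+1}` (columns indexed from 0): on a basis partition `μ`,
it adds a box at the bottom of column `j` if the result is a Young diagram, else gives `0`. -/
def schurU (R : Type*) [CommRing R] (j : ℕ) :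
    Module.End R (YoungDiagram →₀ R) :=
  Finsupp.lift (YoungDiagram →₀ R) R YoungDiagram fun μ =>
    if h : ∃ lam : YoungDiagram, lam.cells = insert (μ.colLen j, j) μ.cells
    then Finsupp.single h.choose 1 else 0

/-- The Schur "down" operator `d_{j+1}`: on a basis partition `λ`, it removes the bottom box
of column `j` if the result is a Young diagram, else gives `0`. -/
def schurD (R : Type*) [CommRing R] (j : ℕ) :
    Module.End R (YoungDiagram →₀ R) :=
  Finsupp.lift (YoungDiagram →₀ R) R YoungDiagram fun lam =>
    if h : ∃ μ : YoungDiagram, lam.cells = insert (μ.colLen j, j) μ.cells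
    then Finsupp.single h.choose 1 else 0

/-- The deformed operator `ũ_{j+1} = u_{j+1} - β u_{j+1} d_{j+1}`. -/
def utilde (R : Type*) [CommRing R] (β : R) (j : ℕ) :
    Module.End R (YoungDiagram →₀ R) :=
  schurU R j - β • (schurU R j * schurD R j)

/-- The deformed operator `d̃_{j+1} = d_{j+1} + β d_{j+1}² + β² d_{j+1}³ + ⋯`
(a finite sum on each basis element). -/
def dtilde (R : Type*) [CommRing R] (β : R) (j : ℕ) :
    Module.End R (YoungDiagram →₀ R) :=
  Finsupp.lift (YoungDiagram →₀ R) R YoungDiagram fun lam =>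
    ∑ l ∈ Finset.range (lam.colLen j), β ^ l • ((schurD R j) ^ (l + 1)) (Finsupp.single lam 1)


/-- The up operator `Ũ = ũ_1 + ũ_2 + ⋯` of the `β`-filtered Young graph (a finite sum on
every basis element). -/
def bigU (R : Type*) [CommRing R] (β : R) : Module.End R (YoungDiagram →₀ R) :=
  Finsupp.lift (YoungDiagram →₀ R) R YoungDiagram fun μ =>
    ∑ j ∈ Finset.range (μ.rowLen 0 + 1), utilde R β j (Finsupp.single μ 1)

/-- The down operator `D̃ = d̃_1 + d̃_2 + ⋯` of the `β`-filtered Young graph (a finite sum on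
every basis element). -/
def bigD (R : Type*) [CommRing R] (β : R) : Module.End R (YoungDiagram →₀ R) :=
  Finsupp.lift (YoungDiagram →₀ R) R YoungDiagram fun lam =>
    ∑ j ∈ Finset.range (lam.rowLen 0 + 1), dtilde R β j (Finsupp.single lam 1)

/-- The down operator `D̄` of the Cauchy filtration `κ𝕐` of Young's lattice:
`D̄·λ = Σ_{μ ⊊ λ} κ^{c(λ/μ)} β^{|λ/μ| - c(λ/μ)} μ`. -/
def bigDbar (R : Type*) [CommRing R] (β κ : R) : Module.End R (YoungDiagram →₀ R) :=
  Finsupp.lift (YoungDiagram →₀ R) R YoungDiagram fun lam =>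
    ∑ μ ∈ (subDiagrams lam).erase lam,
      (κ ^ skewCols μ lam * β ^ (skewSize μ lam - skewCols μ lam)) • Finsupp.single μ 1

namespace CFaux
open YoungDiagram Finset

variable {μ ν lam : YoungDiagram} {j k : ℕ}

def Addable (μ : YoungDiagram) (j : ℕ) : Prop := j = 0 ∨ μ.colLen j < μ.colLen (j-1)

def Removable (μ : YoungDiagram) (j : ℕ) : Prop := μ.colLen (j+1) < μ.colLen j

lemma eq_of_cells_eq (h : μ.cells = ν.cells) : μ = ν :=
  SetLike.ext fun x => by rw [← mem_cells, ← mem_cells, h]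

lemma mem_of_le (h : μ ≤ ν) {x : ℕ × ℕ} (hx : x ∈ μ) : x ∈ ν := by
  have := YoungDiagram.cells_subset_iff.2 h
  rw [← mem_cells] at hx ⊢; exact this hx

lemma colLen_mono (h : ν ≤ lam) (j : ℕ) : ν.colLen j ≤ lam.colLen j := by
  by_contra hc
  push_neg at hc
  have h1 : (lam.colLen j, j) ∈ ν := mem_iff_lt_colLen.2 hc
  have h2 := mem_iff_lt_colLen.1 (mem_of_le h h1)
  omega

lemma self_notMem_colLen : (μ.colLen j, j) ∉ μ := by
  rw [mem_iff_lt_colLen]; omega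

lemma colLen_eq_of_iff {m : ℕ} (h : ∀ i, (i, k) ∈ ν ↔ i < m) : ν.colLen k = m := by
  have h1 : ¬ (m < ν.colLen k) := fun hc => by simpa using (h m).1 (mem_iff_lt_colLen.2 hc)
  have h2 : ∀ i, i < m → i < ν.colLen k := fun i hi => mem_iff_lt_colLen.1 ((h i).2 hi)
  rcases Nat.eq_zero_or_pos m with rfl | hm
  · omega
  · have := h2 (m-1) (by omega); omega

lemma addable_lowerSet (h : Addable μ j) :
    IsLowerSet (↑(insert (μ.colLen j, j) μ.cells) : Set (ℕ × ℕ)) := by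
  intro x y hle hy
  simp only [Finset.coe_insert, Set.mem_insert_iff, Finset.mem_coe, mem_cells] at hy ⊢
  rcases hy with rfl | hy
  · rcases y with ⟨a, b⟩
    obtain ⟨ha, hb⟩ := hle
    simp only at ha hb
    rcases eq_or_lt_of_le hb with rfl | hb'
    · rcases eq_or_lt_of_le ha with rfl | ha'
      · left; rfl
      · right; exact mem_iff_lt_colLen.2 ha'
    · right
      rcases h with rfl | h
      · omega
      · refine mem_iff_lt_colLen.2 ?_
        have h3 : μ.colLen (j-1) ≤ μ.colLen b := μ.colLen_anti b (j-1) (by omega)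
        omega
  · right; exact μ.isLowerSet hle hy

def addCol (μ : YoungDiagram) (j : ℕ) : YoungDiagram :=
  if h : Addable μ j then ⟨insert (μ.colLen j, j) μ.cells, addable_lowerSet h⟩ else μ

lemma addCol_cells (h : Addable μ j) :
    (addCol μ j).cells = insert (μ.colLen j, j) μ.cells := by rw [addCol, dif_pos h]

lemma mem_addCol (h : Addable μ j) {x : ℕ × ℕ} :
    x ∈ addCol μ j ↔ x = (μ.colLen j, j) ∨ x ∈ μ := by
  rw [← mem_cells, addCol_cells h, Finset.mem_insert, mem_cells]

lemma colLen_addCol_self (h : Addable μ j) : (addCol μ j).colLen j = μ.colLen j + 1 := by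
  apply colLen_eq_of_iff
  intro i
  rw [mem_addCol h, mem_iff_lt_colLen, Prod.mk.injEq]
  constructor
  · rintro (⟨rfl, -⟩ | h') <;> omega
  · intro hi
    rcases Nat.lt_or_ge i (μ.colLen j) with h' | h'
    · right; exact h'
    · left; omega

lemma colLen_addCol_ne (h : Addable μ j) (hk : k ≠ j) :
    (addCol μ j).colLen k = μ.colLen k := by
  apply colLen_eq_of_iff
  intro i
  rw [mem_addCol h, mem_iff_lt_colLen, Prod.mk.injEq]
  constructor
  · rintro (⟨rfl, rfl⟩ | h')
    · exact absurd rfl hk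
    · exact h'
  · intro hi; right; exact hi

lemma removable_lowerSet (h : Removable lam j) :
    IsLowerSet (↑(lam.cells.erase (lam.colLen j - 1, j)) : Set (ℕ × ℕ)) := by
  have hpos : 0 < lam.colLen j := by unfold Removable at h; omega
  rintro ⟨a, b⟩ ⟨p, q⟩ hle hy
  simp only [Finset.coe_erase, Set.mem_diff, Finset.mem_coe, mem_cells,
    Set.mem_singleton_iff] at hy ⊢
  obtain ⟨hy1, hy2⟩ := hy
  refine ⟨lam.isLowerSet hle hy1, ?_⟩
  intro heq
  injection heq with hp hq
  obtain ⟨hpa, hqb⟩ := hle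
  simp only at hpa hqb
  have hmem : a < lam.colLen b := mem_iff_lt_colLen.1 hy1
  apply hy2
  have hjb : j ≤ b := by omega
  rcases eq_or_lt_of_le hjb with hbe | hb'
  · have hcc : lam.colLen b = lam.colLen j := by rw [hbe]
    have h1 : a = lam.colLen j - 1 := by omega
    have h2 : b = j := by omega
    rw [h1, h2]
  · exfalso
    have h3 : lam.colLen b ≤ lam.colLen (j+1) := lam.colLen_anti (j+1) b (by omega)
    unfold Removable at h
    omega

def delCol (lam : YoungDiagram) (j : ℕ) : YoungDiagram :=
  if h : Removable lam j then ⟨lam.cells.erase (lam.colLen j - 1, j), removable_lowerSet h⟩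
  else lam

lemma delCol_cells (h : Removable lam j) :
    (delCol lam j).cells = lam.cells.erase (lam.colLen j - 1, j) := by rw [delCol, dif_pos h]

lemma mem_delCol (h : Removable lam j) {x : ℕ × ℕ} :
    x ∈ delCol lam j ↔ x ∈ lam ∧ x ≠ (lam.colLen j - 1, j) := by
  rw [← mem_cells, delCol_cells h, Finset.mem_erase, mem_cells, and_comm]

lemma colLen_delCol_self (h : Removable lam j) :
    (delCol lam j).colLen j = lam.colLen j - 1 := by
  have hpos : 0 < lam.colLen j := by unfold Removable at h; omega
  apply colLen_eq_of_iff
  intro i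
  rw [mem_delCol h, mem_iff_lt_colLen]
  simp only [ne_eq, Prod.mk.injEq, and_true]
  omega

lemma colLen_delCol_ne (h : Removable lam j) (hk : k ≠ j) :
    (delCol lam j).colLen k = lam.colLen k := by
  apply colLen_eq_of_iff
  intro i
  rw [mem_delCol h, mem_iff_lt_colLen]
  simp only [ne_eq, Prod.mk.injEq]
  constructor
  · rintro ⟨h1, -⟩; exact h1
  · intro hi
    exact ⟨hi, fun hh => hk hh.2⟩

lemma removable_addCol (h : Addable μ j) : Removable (addCol μ j) j := by
  unfold Removable
  rw [colLen_addCol_self h, colLen_addCol_ne h (by omega : j + 1 ≠ j)]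
  have := μ.colLen_anti j (j+1) (by omega)
  omega

lemma delCol_addCol (h : Addable μ j) : delCol (addCol μ j) j = μ := by
  have hr := removable_addCol h
  apply SetLike.ext
  intro x
  rw [mem_delCol hr, mem_addCol h, colLen_addCol_self h]
  simp only [Nat.add_sub_cancel]
  constructor
  · rintro ⟨rfl | h1, h2⟩
    · exact absurd rfl h2
    · exact h1
  · intro hx
    refine ⟨Or.inr hx, ?_⟩
    rintro rfl
    exact self_notMem_colLen hx

lemma addable_delCol (h : Removable lam j) : Addable (delCol lam j) j := by
  have hpos : 0 < lam.colLen j := by unfold Removable at h; omega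
  rcases Nat.eq_zero_or_pos j with rfl | hj
  · left; rfl
  · right
    rw [colLen_delCol_self h, colLen_delCol_ne h (by omega : j - 1 ≠ j)]
    have := lam.colLen_anti (j-1) j (by omega)
    omega

lemma addCol_delCol (h : Removable lam j) : addCol (delCol lam j) j = lam := by
  have hpos : 0 < lam.colLen j := by unfold Removable at h; omega
  have ha := addable_delCol h
  apply SetLike.ext
  intro x
  rw [mem_addCol ha, mem_delCol h, colLen_delCol_self h]
  constructor
  · rintro (rfl | ⟨h1, -⟩)
    · exact mem_iff_lt_colLen.2 (by omega)
    · exact h1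
  · intro hx
    by_cases hb : x = (lam.colLen j - 1, j)
    · left; exact hb
    · right; exact ⟨hx, hb⟩

lemma lt_addCol (h : Addable μ j) : μ < addCol μ j := by
  rw [← YoungDiagram.cells_ssubset_iff, addCol_cells h]
  exact Finset.ssubset_insert (by rw [mem_cells]; exact self_notMem_colLen)

lemma delCol_lt (h : Removable lam j) : delCol lam j < lam := by
  have hpos : 0 < lam.colLen j := by unfold Removable at h; omega
  rw [← YoungDiagram.cells_ssubset_iff, delCol_cells h]
  exact Finset.erase_ssubset (by rw [mem_cells, mem_iff_lt_colLen]; omega)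


variable {R : Type*} [CommRing R]

lemma lift_single {M : Type*} [AddCommMonoid M] [Module R M] (f : YoungDiagram → M)
    (a : YoungDiagram) :
    (Finsupp.lift M R YoungDiagram f) (Finsupp.single a 1) = f a := by
  rw [Finsupp.lift_apply, Finsupp.sum_single_index (by simp), one_smul]

lemma exists_add_iff {μ : YoungDiagram} {j : ℕ} :
    (∃ lam : YoungDiagram, lam.cells = insert (μ.colLen j, j) μ.cells) ↔ Addable μ j := by
  constructor
  · rintro ⟨lam, hlam⟩
    have hmem : ∀ x : ℕ × ℕ, x ∈ lam ↔ x = (μ.colLen j, j) ∨ x ∈ μ := fun x => by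
      rw [← mem_cells, hlam, Finset.mem_insert, mem_cells]
    rcases Nat.eq_zero_or_pos j with rfl | hj
    · left; rfl
    · right
      have h1 : (μ.colLen j, j) ∈ lam := (hmem _).2 (Or.inl rfl)
      have h2 : (μ.colLen j, j - 1) ∈ lam := lam.up_left_mem (le_refl _) (by omega) h1
      rcases (hmem _).1 h2 with heq | h3
      · exfalso; injection heq with h4 h5; omega
      · exact mem_iff_lt_colLen.1 h3
  · intro h; exact ⟨addCol μ j, addCol_cells h⟩

lemma choose_eq_addCol {μ : YoungDiagram} {j : ℕ}
    (h : ∃ lam : YoungDiagram, lam.cells = insert (μ.colLen j, j) μ.cells) :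
    h.choose = addCol μ j := by
  apply eq_of_cells_eq
  rw [h.choose_spec, addCol_cells (exists_add_iff.1 h)]

lemma cells_insert_colLen {μ lam : YoungDiagram} {j : ℕ}
    (hμ : lam.cells = insert (μ.colLen j, j) μ.cells) :
    lam.colLen j = μ.colLen j + 1 := by
  have hmem : ∀ x : ℕ × ℕ, x ∈ lam ↔ x = (μ.colLen j, j) ∨ x ∈ μ := fun x => by
    rw [← mem_cells, hμ, Finset.mem_insert, mem_cells]
  apply colLen_eq_of_iff
  intro i
  rw [hmem, mem_iff_lt_colLen, Prod.mk.injEq]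
  constructor
  · rintro (⟨rfl, -⟩ | h') <;> omega
  · intro hi
    rcases Nat.lt_or_ge i (μ.colLen j) with h' | h'
    · right; exact h'
    · left; omega

lemma exists_del_iff {lam : YoungDiagram} {j : ℕ} :
    (∃ μ : YoungDiagram, lam.cells = insert (μ.colLen j, j) μ.cells) ↔ Removable lam j := by
  constructor
  · rintro ⟨μ, hμ⟩
    have hmem : ∀ x : ℕ × ℕ, x ∈ lam ↔ x = (μ.colLen j, j) ∨ x ∈ μ := fun x => by
      rw [← mem_cells, hμ, Finset.mem_insert, mem_cells]
    have hcl : lam.colLen j = μ.colLen j + 1 := cells_insert_colLen hμ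
    have hcl2 : lam.colLen (j+1) = μ.colLen (j+1) := by
      apply colLen_eq_of_iff
      intro i
      rw [hmem, mem_iff_lt_colLen, Prod.mk.injEq]
      constructor
      · rintro (⟨-, h'⟩ | h')
        · omega
        · exact h'
      · intro hi; right; exact hi
    unfold Removable
    have := μ.colLen_anti j (j+1) (by omega)
    omega
  · intro h
    have hpos : 0 < lam.colLen j := by unfold Removable at h; omega
    have hbox : (lam.colLen j - 1, j) ∈ lam.cells := by
      rw [mem_cells, mem_iff_lt_colLen]; omega
    exact ⟨delCol lam j, by
      rw [colLen_delCol_self h, delCol_cells h, Finset.insert_erase hbox]⟩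

lemma choose_eq_delCol {lam : YoungDiagram} {j : ℕ}
    (h : ∃ μ : YoungDiagram, lam.cells = insert (μ.colLen j, j) μ.cells) :
    h.choose = delCol lam j := by
  have hr : Removable lam j := exists_del_iff.1 h
  have hspec := h.choose_spec
  set μ0 := h.choose with hμ0
  clear_value μ0
  have hcl : lam.colLen j = μ0.colLen j + 1 := cells_insert_colLen hspec
  have hnm : (μ0.colLen j, j) ∉ μ0.cells := by
    rw [mem_cells]; exact self_notMem_colLen
  apply eq_of_cells_eq
  rw [delCol_cells hr]
  have h2 : lam.cells.erase (lam.colLen j - 1, j) = μ0.cells := by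
    rw [hspec, hcl]
    simp only [Nat.add_sub_cancel]
    exact Finset.erase_insert hnm
  exact h2.symm

lemma schurU_single (j : ℕ) (μ : YoungDiagram) :
    schurU R j (Finsupp.single μ 1) =
      if Addable μ j then Finsupp.single (addCol μ j) (1 : R) else 0 := by
  unfold schurU
  rw [lift_single]
  by_cases h : Addable μ j
  · rw [dif_pos (exists_add_iff.2 h), choose_eq_addCol (exists_add_iff.2 h), if_pos h]
  · rw [dif_neg (fun he => h (exists_add_iff.1 he)), if_neg h]

lemma schurD_single (j : ℕ) (lam : YoungDiagram) :
    schurD R j (Finsupp.single lam 1) =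
      if Removable lam j then Finsupp.single (delCol lam j) (1 : R) else 0 := by
  unfold schurD
  rw [lift_single]
  by_cases h : Removable lam j
  · rw [dif_pos (exists_del_iff.2 h), choose_eq_delCol (exists_del_iff.2 h), if_pos h]
  · rw [dif_neg (fun he => h (exists_del_iff.1 he)), if_neg h]

lemma utilde_single (β : R) (j : ℕ) (μ : YoungDiagram) :
    utilde R β j (Finsupp.single μ 1) =
      (if Addable μ j then Finsupp.single (addCol μ j) (1 : R) else 0)
        - β • (if Removable μ j then Finsupp.single μ (1 : R) else 0) := by
  unfold utilde
  rw [LinearMap.sub_apply, LinearMap.smul_apply, Module.End.mul_apply, schurD_single,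
    schurU_single]
  congr 2
  by_cases h : Removable μ j
  · rw [if_pos h, if_pos h, schurU_single, if_pos (addable_delCol h), addCol_delCol h]
  · rw [if_neg h, if_neg h, map_zero]

lemma rowLen0_mono {ν lam : YoungDiagram} (h : ν ≤ lam) : ν.rowLen 0 ≤ lam.rowLen 0 := by
  by_contra hc
  push_neg at hc
  have h1 : (0, lam.rowLen 0) ∈ ν := mem_iff_lt_rowLen.2 hc
  have h2 := mem_iff_lt_rowLen.1 (mem_of_le h h1)
  omega

lemma colLen_eq_zero {μ : YoungDiagram} {j : ℕ} (hj : μ.rowLen 0 ≤ j) : μ.colLen j = 0 := by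
  by_contra hc
  have h1 : (0, j) ∈ μ := mem_iff_lt_colLen.2 (by omega)
  have h2 := mem_iff_lt_rowLen.1 h1
  omega

lemma rowLen_le_of_colLen_eq_zero {μ : YoungDiagram} {k : ℕ} (h : μ.colLen k = 0) :
    μ.rowLen 0 ≤ k := by
  by_contra hc
  push_neg at hc
  have h1 : (0, k) ∈ μ := mem_iff_lt_rowLen.2 hc
  have h2 := mem_iff_lt_colLen.1 h1
  omega

lemma addable_le_rowLen {lam : YoungDiagram} {j : ℕ} (h : Addable lam j) :
    j ≤ lam.rowLen 0 := by
  rcases h with rfl | h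
  · omega
  · by_contra hc
    push_neg at hc
    have h1 : lam.colLen (j-1) = 0 := colLen_eq_zero (by omega)
    omega

lemma rowLen0_addCol {lam : YoungDiagram} {j : ℕ} (h : Addable lam j) :
    (addCol lam j).rowLen 0 ≤ lam.rowLen 0 + 1 := by
  apply rowLen_le_of_colLen_eq_zero
  have hj : j ≤ lam.rowLen 0 := addable_le_rowLen h
  rw [colLen_addCol_ne h (by omega)]
  exact colLen_eq_zero (by omega)

lemma utilde_single_zero (β : R) {μ : YoungDiagram} {j : ℕ} (hj : μ.rowLen 0 + 1 ≤ j) :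
    utilde R β j (Finsupp.single μ 1) = 0 := by
  rw [utilde_single]
  have h1 : μ.colLen j = 0 := colLen_eq_zero (by omega)
  have h2 : μ.colLen (j-1) = 0 := colLen_eq_zero (by omega)
  have hna : ¬ Addable μ j := by rintro (rfl | h) <;> omega
  have hnr : ¬ Removable μ j := by unfold Removable; omega
  rw [if_neg hna, if_neg hnr, smul_zero, sub_zero]

lemma bigU_single (β : R) (μ : YoungDiagram) {M : ℕ} (hM : μ.rowLen 0 + 1 ≤ M) :
    bigU R β (Finsupp.single μ 1) = ∑ j ∈ Finset.range M, utilde R β j (Finsupp.single μ 1) := by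
  unfold bigU
  rw [lift_single]
  apply Finset.sum_subset (Finset.range_subset_range.2 hM)
  intro j hj1 hj2
  rw [Finset.mem_range] at hj2
  exact utilde_single_zero β (by omega)

def Wt (β κ : R) (T : Finset (ℕ × ℕ)) : R :=
  κ ^ (T.image Prod.snd).card * β ^ (T.card - (T.image Prod.snd).card)

lemma mem_subDiagrams {μ lam : YoungDiagram} : μ ∈ subDiagrams lam ↔ μ ≤ lam := by
  unfold subDiagrams
  simp only [Finset.mem_image, Finset.mem_attach, true_and, Subtype.exists]
  constructor
  · rintro ⟨s, hs, rfl⟩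
    rw [Finset.mem_filter, Finset.mem_powerset] at hs
    exact YoungDiagram.cells_subset_iff.1 hs.1
  · intro h
    refine ⟨μ.cells, ?_, rfl⟩
    rw [Finset.mem_filter, Finset.mem_powerset]
    exact ⟨YoungDiagram.cells_subset_iff.2 h, μ.isLowerSet⟩

lemma bigDbar_single (β κ : R) (lam : YoungDiagram) :
    bigDbar R β κ (Finsupp.single lam 1) =
      ∑ μ ∈ (subDiagrams lam).erase lam,
        Wt β κ (skewCells μ lam) • Finsupp.single μ (1 : R) := by
  unfold bigDbar
  rw [lift_single]
  rfl

lemma Wt_empty (β κ : R) : Wt β κ (∅ : Finset (ℕ × ℕ)) = 1 := by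
  simp [Wt]

lemma Wt_insert (β κ : R) {T : Finset (ℕ × ℕ)} {x : ℕ × ℕ} (hx : x ∉ T) :
    Wt β κ (insert x T) = (if x.2 ∈ T.image Prod.snd then β else κ) * Wt β κ T := by
  unfold Wt
  rw [Finset.card_insert_of_notMem hx, Finset.image_insert]
  have hle : (T.image Prod.snd).card ≤ T.card := Finset.card_image_le
  by_cases h : x.2 ∈ T.image Prod.snd
  · rw [if_pos h, Finset.insert_eq_self.2 h]
    have he : T.card + 1 - (T.image Prod.snd).card
        = (T.card - (T.image Prod.snd).card) + 1 := by omega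
    rw [he, pow_succ]
    ring
  · rw [if_neg h, Finset.card_insert_of_notMem h]
    have he : T.card + 1 - ((T.image Prod.snd).card + 1)
        = T.card - (T.image Prod.snd).card := by omega
    rw [he, pow_succ]
    ring

lemma skew_self (lam : YoungDiagram) : skewCells lam lam = ∅ := by
  simp [skewCells]

lemma mem_skewCells {μ lam : YoungDiagram} {x : ℕ × ℕ} :
    x ∈ skewCells μ lam ↔ x ∈ lam ∧ x ∉ μ := by
  simp [skewCells, Finset.mem_sdiff, mem_cells]

lemma mem_skew_cols {ν lam : YoungDiagram} (hν : ν ≤ lam) {j : ℕ} :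
    j ∈ (skewCells ν lam).image Prod.snd ↔ ν.colLen j < lam.colLen j := by
  rw [Finset.mem_image]
  constructor
  · rintro ⟨⟨i, j'⟩, hx, rfl⟩
    rw [mem_skewCells] at hx
    have h1 := mem_iff_lt_colLen.1 hx.1
    have h2 : ¬ i < ν.colLen j' := fun hc => hx.2 (mem_iff_lt_colLen.2 hc)
    simp only
    omega
  · intro h
    refine ⟨(ν.colLen j, j), ?_, rfl⟩
    rw [mem_skewCells]
    exact ⟨mem_iff_lt_colLen.2 h, self_notMem_colLen⟩

lemma skew_addCol {ν lam : YoungDiagram} (hν : ν ≤ lam) {j : ℕ} (h : Addable lam j) :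
    skewCells ν (addCol lam j) = insert (lam.colLen j, j) (skewCells ν lam) := by
  have hb : (lam.colLen j, j) ∉ ν := fun hc => self_notMem_colLen (mem_of_le hν hc)
  ext x
  rw [mem_skewCells, Finset.mem_insert, mem_skewCells, mem_addCol h]
  constructor
  · rintro ⟨rfl | h1, h2⟩
    · left; rfl
    · right; exact ⟨h1, h2⟩
  · rintro (rfl | ⟨h1, h2⟩)
    · exact ⟨Or.inl rfl, hb⟩
    · exact ⟨Or.inr h1, h2⟩

lemma skew_delCol {ν lam : YoungDiagram} (hν : ν ≤ lam) {j : ℕ} (h : Removable ν j) :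
    skewCells (delCol ν j) lam = insert (ν.colLen j - 1, j) (skewCells ν lam) := by
  have hpos : 0 < ν.colLen j := by unfold Removable at h; omega
  have hbν : (ν.colLen j - 1, j) ∈ ν := mem_iff_lt_colLen.2 (by omega)
  have hbl : (ν.colLen j - 1, j) ∈ lam := mem_of_le hν hbν
  ext x
  rw [mem_skewCells, Finset.mem_insert, mem_skewCells, mem_delCol h]
  constructor
  · rintro ⟨h1, h2⟩
    by_cases hx : x = (ν.colLen j - 1, j)
    · left; exact hx
    · right; exact ⟨h1, fun hc => h2 ⟨hc, hx⟩⟩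
  · rintro (rfl | ⟨h1, h2⟩)
    · exact ⟨hbl, fun hc => hc.2 rfl⟩
    · exact ⟨h1, fun hc => h2 hc.1⟩

lemma Wt_skew_addCol (β κ : R) {ν lam : YoungDiagram} (hν : ν ≤ lam) {j : ℕ}
    (h : Addable lam j) :
    Wt β κ (skewCells ν (addCol lam j)) =
      (if ν.colLen j = lam.colLen j then κ else β) * Wt β κ (skewCells ν lam) := by
  have hnm : (lam.colLen j, j) ∉ skewCells ν lam :=
    fun hc => self_notMem_colLen (mem_skewCells.1 hc).1
  rw [skew_addCol hν h, Wt_insert β κ hnm]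
  congr 1
  have hm := colLen_mono hν j
  have hcond : ((lam.colLen j, j).2 ∈ (skewCells ν lam).image Prod.snd)
      ↔ ν.colLen j < lam.colLen j := mem_skew_cols hν
  by_cases ht : ν.colLen j = lam.colLen j
  · rw [if_neg (fun hc => absurd (hcond.1 hc) (by omega)), if_pos ht]
  · rw [if_pos (hcond.2 (by omega)), if_neg ht]

lemma Wt_skew_delCol (β κ : R) {ν lam : YoungDiagram} (hν : ν ≤ lam) {j : ℕ}
    (h : Removable ν j) :
    Wt β κ (skewCells (delCol ν j) lam) =
      (if ν.colLen j = lam.colLen j then κ else β) * Wt β κ (skewCells ν lam) := by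
  have hpos : 0 < ν.colLen j := by unfold Removable at h; omega
  have hbν : (ν.colLen j - 1, j) ∈ ν := mem_iff_lt_colLen.2 (by omega)
  have hnm : (ν.colLen j - 1, j) ∉ skewCells ν lam :=
    fun hc => (mem_skewCells.1 hc).2 hbν
  rw [skew_delCol hν h, Wt_insert β κ hnm]
  congr 1
  have hm := colLen_mono hν j
  have hcond : ((ν.colLen j - 1, j).2 ∈ (skewCells ν lam).image Prod.snd)
      ↔ ν.colLen j < lam.colLen j := mem_skew_cols hν
  by_cases ht : ν.colLen j = lam.colLen j
  · rw [if_neg (fun hc => absurd (hcond.1 hc) (by omega)), if_pos ht]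
  · rw [if_pos (hcond.2 (by omega)), if_neg ht]

lemma add_eq_iff {μ ν : YoungDiagram} {j : ℕ} :
    (Addable μ j ∧ addCol μ j = ν) ↔ (Removable ν j ∧ μ = delCol ν j) := by
  constructor
  · rintro ⟨h, rfl⟩
    exact ⟨removable_addCol h, (delCol_addCol h).symm⟩
  · rintro ⟨h, rfl⟩
    exact ⟨addable_delCol h, addCol_delCol h⟩

lemma addable_succ_iff {lam : YoungDiagram} {j : ℕ} :
    Addable lam (j+1) ↔ lam.colLen (j+1) < lam.colLen j := by
  unfold Addable
  rw [Nat.add_sub_cancel]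
  constructor
  · rintro (h | h)
    · omega
    · exact h
  · intro h; right; exact h

lemma step_count {n n' c c' : ℕ} (h1 : n' ≤ n) (h2 : c' ≤ c) (h3 : n ≤ c) (h4 : n' ≤ c') :
    (if n = c then (1:R) else 0) * (if n' < n then 1 else 0)
      - (if n' = c' then 1 else 0) * (if c' < c then 1 else 0)
    = (if n = c then 1 else 0) - (if n' = c' then 1 else 0) := by
  split_ifs
  all_goals try ring
  all_goals (exfalso; omega)

lemma count_sum (β κ : R) {ν lam : YoungDiagram} (hν : ν ≤ lam) {M : ℕ}
    (hM : lam.rowLen 0 ≤ M) :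
    ∑ j ∈ Finset.range (M+1),
      (if ν.colLen j = lam.colLen j then (1:R) else 0) *
        ((if Addable lam j then 1 else 0) - (if Removable ν j then 1 else 0)) = 1 := by
  set t : ℕ → R := fun j => if ν.colLen j = lam.colLen j then (1:R) else 0 with ht
  set a : ℕ → R := fun j => if Addable lam j then (1:R) else 0 with ha
  set b : ℕ → R := fun j => if Removable ν j then (1:R) else 0 with hb
  have key : ∀ j, t (j+1) * a (j+1) = t j * b j - t j + t (j+1) := by
    intro j
    have e1 : a (j+1) = if lam.colLen (j+1) < lam.colLen j then (1:R) else 0 := by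
      rw [ha]; simp only [addable_succ_iff]
    have e2 : b j = if ν.colLen (j+1) < ν.colLen j then (1:R) else 0 := by
      rw [hb]
      exact if_congr Iff.rfl rfl rfl
    have h1 : ν.colLen (j+1) ≤ ν.colLen j := ν.colLen_anti j (j+1) (by omega)
    have h2 : lam.colLen (j+1) ≤ lam.colLen j := lam.colLen_anti j (j+1) (by omega)
    have h3 : ν.colLen j ≤ lam.colLen j := colLen_mono hν j
    have h4 : ν.colLen (j+1) ≤ lam.colLen (j+1) := colLen_mono hν (j+1)
    have hs := step_count (R := R) h1 h2 h3 h4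
    rw [e1, e2, ht]
    simp only
    linear_combination (-1 : R) * hs
  have hsplit : ∀ j, t j * (a j - b j) = t j * a j - t j * b j := fun j => by ring
  rw [Finset.sum_congr rfl (fun j _ => hsplit j), Finset.sum_sub_distrib]
  have hSa : ∑ j ∈ Finset.range (M+1), t j * a j
      = (∑ j ∈ Finset.range M, t (j+1) * a (j+1)) + t 0 * a 0 := by
    rw [Finset.sum_range_succ']
  have ha0 : a 0 = 1 := by rw [ha]; exact if_pos (Or.inl rfl)
  have htel : ∑ j ∈ Finset.range M, (t j - t (j+1)) = t 0 - t M := by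
    exact Finset.sum_range_sub' t M
  have hSa2 : ∑ j ∈ Finset.range M, t (j+1) * a (j+1)
      = (∑ j ∈ Finset.range M, t j * b j) - (t 0 - t M) := by
    rw [Finset.sum_congr rfl (fun j _ => key j), ← htel]
    rw [Finset.sum_sub_distrib, Finset.sum_add_distrib, Finset.sum_sub_distrib]
    ring
  have hSb : ∑ j ∈ Finset.range (M+1), t j * b j
      = (∑ j ∈ Finset.range M, t j * b j) + t M * b M := Finset.sum_range_succ _ M
  have htM : t M = 1 := by
    rw [ht]
    have hl : lam.colLen M = 0 := colLen_eq_zero hM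
    have hn : ν.colLen M = 0 := colLen_eq_zero (le_trans (rowLen0_mono hν) hM)
    simp [hl, hn]
  have hbM : b M = 0 := by
    rw [hb]
    have hn : ν.colLen M = 0 := colLen_eq_zero (le_trans (rowLen0_mono hν) hM)
    have : ¬ Removable ν M := by unfold Removable; omega
    exact if_neg this
  rw [hSa, hSa2, hSb, ha0, htM, hbM]
  ring

lemma count_sum_self (β κ : R) {lam : YoungDiagram} {M : ℕ} (hM : lam.rowLen 0 ≤ M) :
    ∑ j ∈ Finset.range (M+1),
      ((if Addable lam j then (1:R) else 0) - (if Removable lam j then 1 else 0)) = 1 := by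
  have h := count_sum β κ (le_refl lam) hM
  simpa using h

def Dc (β κ : R) (ν σ : YoungDiagram) : R :=
  if ν ≤ σ ∧ ν ≠ σ then Wt β κ (skewCells ν σ) else 0

lemma bigDbar_coeff (β κ : R) (σ ν : YoungDiagram) :
    (bigDbar R β κ (Finsupp.single σ 1)) ν = Dc β κ ν σ := by
  rw [bigDbar_single, Finsupp.finset_sum_apply]
  simp only [Finsupp.smul_apply, Finsupp.single_apply, smul_eq_mul, mul_ite, mul_one, mul_zero]
  rw [Finset.sum_ite_eq']
  unfold Dc
  by_cases h : ν ≤ σ ∧ ν ≠ σ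
  · rw [if_pos (Finset.mem_erase.2 ⟨h.2, mem_subDiagrams.2 h.1⟩), if_pos h]
  · rw [if_neg (fun hc => h ⟨mem_subDiagrams.1 (Finset.mem_erase.1 hc).2,
      (Finset.mem_erase.1 hc).1⟩), if_neg h]

lemma utilde_coeff (β : R) (j : ℕ) (μ ν : YoungDiagram) :
    (utilde R β j (Finsupp.single μ 1)) ν =
      (if Addable μ j ∧ addCol μ j = ν then (1:R) else 0)
        - β * (if Removable μ j ∧ μ = ν then 1 else 0) := by
  rw [utilde_single, Finsupp.sub_apply, Finsupp.smul_apply, smul_eq_mul]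
  congr 1
  · by_cases h : Addable μ j
    · rw [if_pos h, Finsupp.single_apply]
      by_cases h2 : addCol μ j = ν
      · rw [if_pos h2, if_pos ⟨h, h2⟩]
      · rw [if_neg h2, if_neg (fun hc => h2 hc.2)]
    · rw [if_neg h, if_neg (fun hc => h hc.1), Finsupp.coe_zero, Pi.zero_apply]
  · congr 1
    by_cases h : Removable μ j
    · rw [if_pos h, Finsupp.single_apply]
      by_cases h2 : μ = ν
      · rw [if_pos h2, if_pos ⟨h, h2⟩]
      · rw [if_neg h2, if_neg (fun hc => h2 hc.2)]
    · rw [if_neg h, if_neg (fun hc => h hc.1), Finsupp.coe_zero, Pi.zero_apply]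

lemma DU_coeff (β κ : R) (lam ν : YoungDiagram) {M : ℕ} (hM : lam.rowLen 0 ≤ M) :
    (bigDbar R β κ (bigU R β (Finsupp.single lam 1))) ν
      = ∑ j ∈ Finset.range (M+1),
          ((if Addable lam j then Dc β κ ν (addCol lam j) else 0)
            - β * (if Removable lam j then Dc β κ ν lam else 0)) := by
  rw [bigU_single β lam (M := M+1) (by omega), map_sum, Finsupp.finset_sum_apply]
  apply Finset.sum_congr rfl
  intro j hj
  rw [utilde_single, map_sub, map_smul, Finsupp.sub_apply, Finsupp.smul_apply, smul_eq_mul]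
  congr 1
  · by_cases h : Addable lam j
    · rw [if_pos h, if_pos h, bigDbar_coeff]
    · rw [if_neg h, if_neg h, map_zero, Finsupp.coe_zero, Pi.zero_apply]
  · congr 1
    by_cases h : Removable lam j
    · rw [if_pos h, if_pos h, bigDbar_coeff]
    · rw [if_neg h, if_neg h, map_zero, Finsupp.coe_zero, Pi.zero_apply]

lemma UD_coeff (β κ : R) (lam ν : YoungDiagram) {M : ℕ} (hM : lam.rowLen 0 ≤ M) :
    (bigU R β (bigDbar R β κ (Finsupp.single lam 1))) ν
      = ∑ μ ∈ (subDiagrams lam).erase lam, Wt β κ (skewCells μ lam) *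
          ∑ j ∈ Finset.range (M+1),
            ((if Addable μ j ∧ addCol μ j = ν then (1:R) else 0)
              - β * (if Removable μ j ∧ μ = ν then 1 else 0)) := by
  rw [bigDbar_single, map_sum, Finsupp.finset_sum_apply]
  apply Finset.sum_congr rfl
  intro μ hμ
  have hle : μ ≤ lam := mem_subDiagrams.1 (Finset.mem_erase.1 hμ).2
  rw [map_smul, Finsupp.smul_apply, smul_eq_mul]
  congr 1
  rw [bigU_single β μ (M := M+1) (by have := rowLen0_mono hle; omega),
    Finsupp.finset_sum_apply]
  apply Finset.sum_congr rfl
  intro j hj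
  exact utilde_coeff β j μ ν

lemma sum_pick {s : Finset YoungDiagram} (d : YoungDiagram) (f : YoungDiagram → R) :
    ∑ μ ∈ s, f μ * (if μ = d then (1:R) else 0) = if d ∈ s then f d else 0 := by
  simp only [mul_ite, mul_one, mul_zero]
  exact Finset.sum_ite_eq' s d f

lemma le_of_mem_imp {μ ν : YoungDiagram} (h : ∀ x : ℕ × ℕ, x ∈ μ → x ∈ ν) : μ ≤ ν := by
  rw [← YoungDiagram.cells_subset_iff]
  intro x hx
  rw [mem_cells] at hx ⊢
  exact h x hx

lemma not_le_exists {ν lam : YoungDiagram} (h : ¬ ν ≤ lam) :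
    ∃ x : ℕ × ℕ, x ∈ ν ∧ x ∉ lam := by
  by_contra hc
  push_neg at hc
  exact h (le_of_mem_imp fun x hx => hc x hx)

lemma fwdC {ν lam : YoungDiagram} {j : ℕ} (hν : ¬ ν ≤ lam) (hA : Addable lam j)
    (h2 : ν ≤ addCol lam j) (h3 : ν ≠ addCol lam j) :
    Removable ν j ∧ delCol ν j ≤ lam ∧ delCol ν j ≠ lam ∧
      skewCells ν (addCol lam j) = skewCells (delCol ν j) lam := by
  obtain ⟨x, hxν, hxlam⟩ := not_le_exists hν
  have hx : x = (lam.colLen j, j) := by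
    rcases (mem_addCol hA).1 (mem_of_le h2 hxν) with h | h
    · exact h
    · exact absurd h hxlam
  subst hx
  have hbν : (lam.colLen j, j) ∈ ν := hxν
  have hνc : ν.colLen j = lam.colLen j + 1 := by
    apply colLen_eq_of_iff
    intro i
    constructor
    · intro hi
      rcases (mem_addCol hA).1 (mem_of_le h2 hi) with h | h
      · injection h with h' h''; omega
      · have := mem_iff_lt_colLen.1 h; omega
    · intro hi
      exact ν.up_left_mem (by omega) (le_refl j) hbν
  have hν1 : ν.colLen (j+1) ≤ lam.colLen (j+1) := by
    by_contra hcon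
    push_neg at hcon
    have h1 : (lam.colLen (j+1), j+1) ∈ ν := mem_iff_lt_colLen.2 hcon
    rcases (mem_addCol hA).1 (mem_of_le h2 h1) with h | h
    · injection h with h' h''; omega
    · have := mem_iff_lt_colLen.1 h; omega
  have hrem : Removable ν j := by
    unfold Removable
    have := lam.colLen_anti j (j+1) (by omega)
    omega
  have hdel_mem : ∀ x : ℕ × ℕ, x ∈ delCol ν j ↔ x ∈ ν ∧ x ≠ (lam.colLen j, j) := by
    intro x
    rw [mem_delCol hrem, hνc]
    simp only [Nat.add_sub_cancel]
  have hdle : delCol ν j ≤ lam := by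
    apply le_of_mem_imp
    intro x hx
    rw [hdel_mem] at hx
    rcases (mem_addCol hA).1 (mem_of_le h2 hx.1) with h | h
    · exact absurd h hx.2
    · exact h
  have hdne : delCol ν j ≠ lam := by
    intro he
    apply h3
    have hac : addCol (delCol ν j) j = ν := addCol_delCol hrem
    rw [he] at hac
    exact hac.symm
  refine ⟨hrem, hdle, hdne, ?_⟩
  ext x
  rw [mem_skewCells, mem_skewCells, mem_addCol hA, hdel_mem]
  constructor
  · rintro ⟨rfl | h1, h4⟩
    · exact absurd hbν h4
    · exact ⟨h1, fun hc => h4 hc.1⟩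
  · rintro ⟨h1, h4⟩
    refine ⟨Or.inr h1, fun hc => ?_⟩
    by_cases hb : x = (lam.colLen j, j)
    · subst hb; exact self_notMem_colLen h1
    · exact h4 ⟨hc, hb⟩

lemma bwdC {ν lam : YoungDiagram} {j : ℕ} (hν : ¬ ν ≤ lam) (h1 : Removable ν j)
    (h2 : delCol ν j ≤ lam) (h3 : delCol ν j ≠ lam) :
    Addable lam j ∧ ν ≤ addCol lam j ∧ ν ≠ addCol lam j := by
  have hpos : 0 < ν.colLen j := by unfold Removable at h1; omega
  have hbν : (ν.colLen j - 1, j) ∈ ν := mem_iff_lt_colLen.2 (by omega)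
  have hblam : (ν.colLen j - 1, j) ∉ lam := by
    intro hb
    apply hν
    apply le_of_mem_imp
    intro x hx
    by_cases hxb : x = (ν.colLen j - 1, j)
    · subst hxb; exact hb
    · exact mem_of_le h2 ((mem_delCol h1).2 ⟨hx, hxb⟩)
  have hc : lam.colLen j = ν.colLen j - 1 := by
    apply colLen_eq_of_iff
    intro i
    constructor
    · intro hi
      by_contra hge
      push_neg at hge
      exact hblam (lam.up_left_mem (by omega) (le_refl j) hi)
    · intro hi
      have hiν : (i, j) ∈ ν := mem_iff_lt_colLen.2 (by omega)
      have hne : (i, j) ≠ (ν.colLen j - 1, j) := by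
        simp only [ne_eq, Prod.mk.injEq]
        omega
      exact mem_of_le h2 ((mem_delCol h1).2 ⟨hiν, hne⟩)
  have hA : Addable lam j := by
    rcases Nat.eq_zero_or_pos j with rfl | hj
    · left; rfl
    · right
      have hb' : (ν.colLen j - 1, j - 1) ∈ ν := ν.up_left_mem (le_refl _) (by omega) hbν
      have hne : (ν.colLen j - 1, j - 1) ≠ (ν.colLen j - 1, j) := by
        simp only [ne_eq, Prod.mk.injEq]
        omega
      have hmem : (ν.colLen j - 1, j - 1) ∈ lam := mem_of_le h2 ((mem_delCol h1).2 ⟨hb', hne⟩)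
      have := mem_iff_lt_colLen.1 hmem
      omega
  have hbox : (lam.colLen j, j) = (ν.colLen j - 1, j) := by rw [hc]
  have hle : ν ≤ addCol lam j := by
    apply le_of_mem_imp
    intro x hx
    rw [mem_addCol hA]
    by_cases hxb : x = (ν.colLen j - 1, j)
    · subst hxb; left; exact hbox.symm
    · right; exact mem_of_le h2 ((mem_delCol h1).2 ⟨hx, hxb⟩)
  have hne : ν ≠ addCol lam j := by
    intro he
    apply h3
    have hd : delCol (addCol lam j) j = lam := delCol_addCol hA
    rw [← he] at hd
    exact hd
  exact ⟨hA, hle, hne⟩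

lemma caseC_term (β κ : R) {ν lam : YoungDiagram} (hν : ¬ ν ≤ lam) (j : ℕ) :
    (if Addable lam j then Dc β κ ν (addCol lam j) else 0)
      = (if Removable ν j ∧ (delCol ν j ≤ lam ∧ delCol ν j ≠ lam)
          then Wt β κ (skewCells (delCol ν j) lam) else 0) := by
  by_cases hA : Addable lam j
  · rw [if_pos hA]
    unfold Dc
    by_cases hC : ν ≤ addCol lam j ∧ ν ≠ addCol lam j
    · obtain ⟨hrem, hdle, hdne, hskew⟩ := fwdC hν hA hC.1 hC.2
      rw [if_pos hC, if_pos ⟨hrem, hdle, hdne⟩, hskew]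
    · rw [if_neg hC, if_neg (fun hP => hC ⟨(bwdC hν hP.1 hP.2.1 hP.2.2).2.1,
        (bwdC hν hP.1 hP.2.1 hP.2.2).2.2⟩)]
  · rw [if_neg hA, if_neg (fun hP => hA (bwdC hν hP.1 hP.2.1 hP.2.2).1)]

lemma UD_eval (β κ : R) (lam ν : YoungDiagram) (M : ℕ) :
    ∑ μ ∈ (subDiagrams lam).erase lam, Wt β κ (skewCells μ lam) *
      ∑ j ∈ Finset.range (M+1),
        ((if Addable μ j ∧ addCol μ j = ν then (1:R) else 0)
          - β * (if Removable μ j ∧ μ = ν then 1 else 0))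
  = (∑ j ∈ Finset.range (M+1),
      (if Removable ν j ∧ (delCol ν j ≤ lam ∧ delCol ν j ≠ lam)
        then Wt β κ (skewCells (delCol ν j) lam) else 0))
    - β * (if ν ≤ lam ∧ ν ≠ lam then Wt β κ (skewCells ν lam) *
        ∑ j ∈ Finset.range (M+1), (if Removable ν j then (1:R) else 0) else 0) := by
  have hstep : ∀ μ ∈ (subDiagrams lam).erase lam,
      Wt β κ (skewCells μ lam) *
        ∑ j ∈ Finset.range (M+1),
          ((if Addable μ j ∧ addCol μ j = ν then (1:R) else 0)
            - β * (if Removable μ j ∧ μ = ν then 1 else 0))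
      = (∑ j ∈ Finset.range (M+1), Wt β κ (skewCells μ lam) *
            (if Addable μ j ∧ addCol μ j = ν then (1:R) else 0))
        - β * ((Wt β κ (skewCells μ lam) *
            ∑ j ∈ Finset.range (M+1), (if Removable μ j then (1:R) else 0))
              * (if μ = ν then (1:R) else 0)) := by
    intro μ _
    rw [Finset.sum_sub_distrib, mul_sub, Finset.mul_sum]
    congr 1
    have hx : ∀ x ∈ Finset.range (M+1),
        Wt β κ (skewCells μ lam) * (β * if Removable μ x ∧ μ = ν then (1:R) else 0)
          = β * ((Wt β κ (skewCells μ lam) * (if Removable μ x then (1:R) else 0))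
              * (if μ = ν then (1:R) else 0)) := by
      intro x _
      by_cases h1 : μ = ν <;> by_cases h2 : Removable μ x <;> simp [h1, h2] <;> ring
    rw [Finset.mul_sum, Finset.sum_congr rfl hx, ← Finset.mul_sum, ← Finset.sum_mul,
      ← Finset.mul_sum]
  rw [Finset.sum_congr rfl hstep, Finset.sum_sub_distrib]
  congr 1
  · rw [Finset.sum_comm]
    apply Finset.sum_congr rfl
    intro j _
    simp only [add_eq_iff]
    by_cases hR : Removable ν j
    · simp only [hR, true_and]
      rw [sum_pick]
      by_cases hd : delCol ν j ∈ (subDiagrams lam).erase lam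
      · rw [if_pos hd, if_pos ⟨mem_subDiagrams.1 (Finset.mem_erase.1 hd).2,
          (Finset.mem_erase.1 hd).1⟩]
      · rw [if_neg hd, if_neg (fun hcon =>
          hd (Finset.mem_erase.2 ⟨hcon.2, mem_subDiagrams.2 hcon.1⟩))]
    · simp [hR]
  · rw [← Finset.mul_sum]
    congr 1
    rw [sum_pick]
    by_cases h : ν ≤ lam ∧ ν ≠ lam
    · rw [if_pos (Finset.mem_erase.2 ⟨h.2, mem_subDiagrams.2 h.1⟩), if_pos h]
    · rw [if_neg (fun hcon => h ⟨mem_subDiagrams.1 (Finset.mem_erase.1 hcon).2,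
        (Finset.mem_erase.1 hcon).1⟩), if_neg h]

lemma scalarB (β κ : R) {ν lam : YoungDiagram} (hν : ν ≤ lam) {M : ℕ}
    (hM : lam.rowLen 0 ≤ M) :
    ∑ j ∈ Finset.range (M+1),
      ((if Addable lam j then (1:R) else 0) - (if Removable ν j then 1 else 0))
        * (if ν.colLen j = lam.colLen j then κ else β)
    = κ + β * (∑ j ∈ Finset.range (M+1), (if Removable lam j then (1:R) else 0))
        - β * (∑ j ∈ Finset.range (M+1), (if Removable ν j then (1:R) else 0)) := by
  have h1 := count_sum β κ hν hM
  have h2 := count_sum_self β κ (lam := lam) hM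
  have hpt : ∀ j ∈ Finset.range (M+1),
      ((if Addable lam j then (1:R) else 0) - (if Removable ν j then 1 else 0))
        * (if ν.colLen j = lam.colLen j then κ else β)
      = κ * ((if ν.colLen j = lam.colLen j then (1:R) else 0) *
            ((if Addable lam j then (1:R) else 0) - (if Removable ν j then 1 else 0)))
        + β * ((if Addable lam j then (1:R) else 0) - (if Removable lam j then 1 else 0))
        + (β * (if Removable lam j then (1:R) else 0)
            - β * (if Removable ν j then (1:R) else 0))
        - β * ((if ν.colLen j = lam.colLen j then (1:R) else 0) *
            ((if Addable lam j then (1:R) else 0) - (if Removable ν j then 1 else 0))) := by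
    intro j _
    by_cases h : ν.colLen j = lam.colLen j
    · rw [if_pos h, if_pos h]; ring
    · rw [if_neg h, if_neg h]; ring
  rw [Finset.sum_congr rfl hpt]
  rw [Finset.sum_sub_distrib, Finset.sum_add_distrib, Finset.sum_add_distrib,
    Finset.sum_sub_distrib, ← Finset.mul_sum, ← Finset.mul_sum, ← Finset.mul_sum,
    ← Finset.mul_sum, ← Finset.mul_sum, h1, h2]
  ring

lemma key (β κ : R) (lam : YoungDiagram) :
    bigDbar R β κ (bigU R β (Finsupp.single lam 1))
      - bigU R β (bigDbar R β κ (Finsupp.single lam 1))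
    = κ • (Finsupp.single lam 1 + bigDbar R β κ (Finsupp.single lam 1)) := by
  ext ν
  rw [Finsupp.sub_apply, Finsupp.smul_apply, Finsupp.add_apply,
    DU_coeff β κ lam ν (le_refl (lam.rowLen 0)), UD_coeff β κ lam ν (le_refl (lam.rowLen 0)),
    UD_eval β κ lam ν (lam.rowLen 0), bigDbar_coeff, smul_eq_mul, Finsupp.single_apply]
  by_cases hA : ν = lam
  · subst hA
    have hDc0 : Dc β κ ν ν = 0 := if_neg (fun h => h.2 rfl)
    have hS1 : ∀ j ∈ Finset.range (ν.rowLen 0 + 1),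
        ((if Addable ν j then Dc β κ ν (addCol ν j) else 0)
          - β * (if Removable ν j then Dc β κ ν ν else 0))
        = κ * (if Addable ν j then (1:R) else 0) := by
      intro j _
      have e2 : β * (if Removable ν j then Dc β κ ν ν else 0) = 0 := by
        by_cases h : Removable ν j <;> simp [h, hDc0]
      rw [e2, sub_zero]
      by_cases h : Addable ν j
      · rw [if_pos h, if_pos h, mul_one]
        unfold Dc
        rw [if_pos ⟨(lt_addCol h).le, (lt_addCol h).ne⟩, Wt_skew_addCol β κ (le_refl ν) h,
          if_pos rfl, skew_self, Wt_empty, mul_one]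
      · rw [if_neg h, if_neg h, mul_zero]
    have hS2 : ∀ j ∈ Finset.range (ν.rowLen 0 + 1),
        (if Removable ν j ∧ (delCol ν j ≤ ν ∧ delCol ν j ≠ ν)
          then Wt β κ (skewCells (delCol ν j) ν) else 0)
        = κ * (if Removable ν j then (1:R) else 0) := by
      intro j _
      by_cases h : Removable ν j
      · rw [if_pos ⟨h, (delCol_lt h).le, (delCol_lt h).ne⟩, if_pos h, mul_one,
          Wt_skew_delCol β κ (le_refl ν) h, if_pos rfl, skew_self, Wt_empty, mul_one]
      · rw [if_neg (fun hc => h hc.1), if_neg h, mul_zero]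
    rw [Finset.sum_congr rfl hS1, Finset.sum_congr rfl hS2,
      if_neg (fun h : ν ≤ ν ∧ ν ≠ ν => h.2 rfl), mul_zero, sub_zero,
      ← Finset.mul_sum, ← Finset.mul_sum, if_pos rfl, hDc0]
    have hsub : (∑ j ∈ Finset.range (ν.rowLen 0 + 1), (if Addable ν j then (1:R) else 0))
        - (∑ j ∈ Finset.range (ν.rowLen 0 + 1), (if Removable ν j then (1:R) else 0)) = 1 := by
      rw [← Finset.sum_sub_distrib]
      exact count_sum_self β κ (le_refl (ν.rowLen 0))
    linear_combination κ * hsub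
  · by_cases hB : ν ≤ lam
    · have hni : ν ≠ lam := hA
      have hS1 : ∀ j ∈ Finset.range (lam.rowLen 0 + 1),
          ((if Addable lam j then Dc β κ ν (addCol lam j) else 0)
            - β * (if Removable lam j then Dc β κ ν lam else 0))
          = ((if Addable lam j then (1:R) else 0) *
              ((if ν.colLen j = lam.colLen j then κ else β) * Wt β κ (skewCells ν lam)))
            - β * ((if Removable lam j then (1:R) else 0) * Wt β κ (skewCells ν lam)) := by
        intro j _
        congr 1
        · by_cases h : Addable lam j
          · rw [if_pos h, if_pos h, one_mul]
            unfold Dc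
            rw [if_pos ⟨le_trans hB (lt_addCol h).le, (lt_of_le_of_lt hB (lt_addCol h)).ne⟩,
              Wt_skew_addCol β κ hB h]
          · rw [if_neg h, if_neg h, zero_mul]
        · congr 1
          by_cases h : Removable lam j
          · rw [if_pos h, if_pos h, one_mul]
            unfold Dc
            rw [if_pos ⟨hB, hni⟩]
          · rw [if_neg h, if_neg h, zero_mul]
      have hS2 : ∀ j ∈ Finset.range (lam.rowLen 0 + 1),
          (if Removable ν j ∧ (delCol ν j ≤ lam ∧ delCol ν j ≠ lam)
            then Wt β κ (skewCells (delCol ν j) lam) else 0)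
          = (if Removable ν j then (1:R) else 0) *
              ((if ν.colLen j = lam.colLen j then κ else β) * Wt β κ (skewCells ν lam)) := by
        intro j _
        by_cases h : Removable ν j
        · rw [if_pos ⟨h, le_trans (delCol_lt h).le hB, (lt_of_lt_of_le (delCol_lt h) hB).ne⟩,
            if_pos h, one_mul, Wt_skew_delCol β κ hB h]
        · rw [if_neg (fun hc => h hc.1), if_neg h, zero_mul]
      have hDc : Dc β κ ν lam = Wt β κ (skewCells ν lam) := if_pos ⟨hB, hni⟩
      rw [Finset.sum_congr rfl hS1, Finset.sum_congr rfl hS2, if_pos ⟨hB, hni⟩,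
        if_neg (fun he : lam = ν => hni he.symm), Finset.sum_sub_distrib, hDc]
      have hA2 : ∑ j ∈ Finset.range (lam.rowLen 0 + 1),
          (if Addable lam j then (1:R) else 0) *
            ((if ν.colLen j = lam.colLen j then κ else β) * Wt β κ (skewCells ν lam))
        = (∑ j ∈ Finset.range (lam.rowLen 0 + 1), (if Addable lam j then (1:R) else 0) *
            (if ν.colLen j = lam.colLen j then κ else β)) * Wt β κ (skewCells ν lam) := by
        rw [Finset.sum_mul]
        exact Finset.sum_congr rfl fun j _ => by ring
      have hR2 : ∑ j ∈ Finset.range (lam.rowLen 0 + 1),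
          (if Removable ν j then (1:R) else 0) *
            ((if ν.colLen j = lam.colLen j then κ else β) * Wt β κ (skewCells ν lam))
        = (∑ j ∈ Finset.range (lam.rowLen 0 + 1), (if Removable ν j then (1:R) else 0) *
            (if ν.colLen j = lam.colLen j then κ else β)) * Wt β κ (skewCells ν lam) := by
        rw [Finset.sum_mul]
        exact Finset.sum_congr rfl fun j _ => by ring
      have hRl : ∑ j ∈ Finset.range (lam.rowLen 0 + 1),
          β * ((if Removable lam j then (1:R) else 0) * Wt β κ (skewCells ν lam))
        = β * ((∑ j ∈ Finset.range (lam.rowLen 0 + 1), (if Removable lam j then (1:R) else 0))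
            * Wt β κ (skewCells ν lam)) := by
        rw [← Finset.mul_sum, ← Finset.sum_mul]
      rw [hA2, hR2, hRl]
      have hsc := scalarB β κ hB (le_refl (lam.rowLen 0))
      have hsplit : ∑ j ∈ Finset.range (lam.rowLen 0 + 1),
          ((if Addable lam j then (1:R) else 0) - (if Removable ν j then 1 else 0))
            * (if ν.colLen j = lam.colLen j then κ else β)
        = (∑ j ∈ Finset.range (lam.rowLen 0 + 1), (if Addable lam j then (1:R) else 0) *
            (if ν.colLen j = lam.colLen j then κ else β))
          - (∑ j ∈ Finset.range (lam.rowLen 0 + 1), (if Removable ν j then (1:R) else 0) *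
            (if ν.colLen j = lam.colLen j then κ else β)) := by
        rw [← Finset.sum_sub_distrib]
        exact Finset.sum_congr rfl fun j _ => by ring
      rw [hsplit] at hsc
      linear_combination Wt β κ (skewCells ν lam) * hsc
    · have hDc0 : Dc β κ ν lam = 0 := if_neg (fun h => hB h.1)
      have hS1 : ∀ j ∈ Finset.range (lam.rowLen 0 + 1),
          ((if Addable lam j then Dc β κ ν (addCol lam j) else 0)
            - β * (if Removable lam j then Dc β κ ν lam else 0))
          = (if Removable ν j ∧ (delCol ν j ≤ lam ∧ delCol ν j ≠ lam)
              then Wt β κ (skewCells (delCol ν j) lam) else 0) := by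
        intro j _
        have e2 : β * (if Removable lam j then Dc β κ ν lam else 0) = 0 := by
          by_cases h : Removable lam j <;> simp [h, hDc0]
        rw [e2, sub_zero]
        exact caseC_term β κ hB j
      rw [Finset.sum_congr rfl hS1, if_neg (fun h : ν ≤ lam ∧ ν ≠ lam => hB h.1), mul_zero,
        sub_zero, sub_self, hDc0, if_neg (fun he : lam = ν => hB (le_of_eq he.symm))]
      ring

end CFaux

/-- The Cauchy filtration `κ𝕐` of Young's lattice is a dual filtered graph:
`D̄Ũ - ŨD̄ = κ(1 + D̄)` (Theorem of Section 9 of the paper). -/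
theorem cauchy_filtration_dual_filtered (R : Type*) [CommRing R] (β κ : R) :
    bigDbar R β κ * bigU R β - bigU R β * bigDbar R β κ = κ • (1 + bigDbar R β κ) := by
  have hkey : ∀ lam : YoungDiagram,
      (bigDbar R β κ * bigU R β - bigU R β * bigDbar R β κ) (Finsupp.single lam (1:R))
        = (κ • (1 + bigDbar R β κ)) (Finsupp.single lam 1) := by
    intro lam
    rw [LinearMap.sub_apply, Module.End.mul_apply, Module.End.mul_apply, LinearMap.smul_apply,
      LinearMap.add_apply, Module.End.one_apply]
    exact CFaux.key β κ lam
  apply Finsupp.lhom_ext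
  intro a b
  have hab : Finsupp.single a b = b • Finsupp.single a (1:R) := by
    rw [Finsupp.smul_single, smul_eq_mul, mul_one]
  rw [hab, map_smul, map_smul, hkey]
end
end
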